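/- arXiv:2103.06143 — 8 statements merged into one kernel-verified Lean document; each statement's English description precedes it below -/
import Mathlib

section
/- Let B be a complex unital Banach algebra and let b ∈ B have polynomial growth. Then the spectrum of b is contained in ℝ (i.e., every spectral value is a real number), and there exist constants C > 0 and γ > 0 such that for every λ ∈ ℂ with Im λ ≠ 0 the element b − λ·1 is invertible in B and ‖(b − λ·1)⁻¹‖ ≤ C·(1 + |Im λ|⁻¹)^γ. -/
/-!
A discrete Laplace transform. Given `λ` with `Im λ ≠ 0`, take a real step `s₀` of modulus
`h = (1 + |λ|)⁻¹` and of sign opposite to `Im λ`, and put `x = i s₀ (b - λ)`. Then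
`‖(exp x)ⁿ‖ = e^{-n h |Im λ|} ‖exp (i n s₀ b)‖ ≤ K (1 + n h)^N e^{-n h |Im λ|}`, so the geometric
series `∑ (exp x)ⁿ` converges absolutely and inverts `1 - exp x`. As
`1 - exp x = -x · (exp x - 1)/x` with commuting factors, `x` is invertible, and so is `b - λ`, with
`‖(b - λ)⁻¹‖ ≤ h ‖(exp x - 1)/x‖ ∑ ‖(exp x)ⁿ‖`. The choice of `h` keeps `‖x‖ ≤ ‖b‖ + ‖1‖`, hence
`‖(exp x - 1)/x‖ ≲ e^{‖x‖}` bounded, and `(1 + n h)^N ≲ (1 + t⁻¹)^N e^{n h t / 2}` gives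
`h ∑ (1 + n h)^N e^{-n h t} ≲ (1 + t⁻¹)^{N+1}` for `t = |Im λ|`.
-/

noncomputable section

/-- An element `b` of a complex unital Banach algebra has *polynomial growth* if
`‖exp (i s b)‖ ≤ K (1 + |s|)^α` for all real `s`, for some `K > 0`, `α ≥ 0`. -/
def HasPolynomialGrowth {B : Type*} [NormedRing B] [NormedAlgebra ℂ B] (b : B) : Prop :=
  ∃ K α : ℝ, 0 < K ∧ 0 ≤ α ∧
    ∀ s : ℝ, ‖NormedSpace.exp ((Complex.I * (s : ℂ)) • b)‖ ≤ K * (1 + |s|) ^ α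

open NormedSpace
open Complex (I)
open scoped Nat

theorem one_add_pow_le_mul_exp_half (N : ℕ) {u : ℝ} (hu : 0 ≤ u) :
    (1 + u) ^ N ≤ 2 ^ N * N ! * Real.exp (1 / 2) * Real.exp (u / 2) := by
  have h := Real.pow_div_factorial_le_exp ((1 + u) / 2) (by positivity) N
  rw [div_le_iff₀ (by positivity), div_pow, div_le_iff₀ (by positivity)] at h
  calc (1 + u) ^ N ≤ Real.exp ((1 + u) / 2) * N ! * 2 ^ N := h
    _ = 2 ^ N * N ! * Real.exp (1 / 2) * Real.exp (u / 2) := by rw [add_div, Real.exp_add]; ring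

theorem inv_one_sub_exp_neg_le {v : ℝ} (hv : 0 < v) : (1 - Real.exp (-v))⁻¹ ≤ 1 + v⁻¹ := by
  have hexp : Real.exp (-v) * (1 + v) ≤ 1 := by
    rw [Real.exp_neg, inv_mul_le_iff₀ (Real.exp_pos v), mul_one, add_comm]
    exact Real.add_one_le_exp v
  have hlow : v / (1 + v) ≤ 1 - Real.exp (-v) := by
    rw [div_le_iff₀ (by positivity)]
    linarith
  calc (1 - Real.exp (-v))⁻¹ ≤ (v / (1 + v))⁻¹ := inv_anti₀ (by positivity) hlow
    _ = 1 + v⁻¹ := by field_simp; ring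

theorem one_add_mul_pow_mul_exp_neg_le (N : ℕ) {h t : ℝ} (hh : 0 ≤ h) (ht : 0 < t) (n : ℕ) :
    (1 + n * h) ^ N * Real.exp (-(n * h * t)) ≤
      2 ^ N * N ! * Real.exp (1 / 2) * (1 + t⁻¹) ^ N * Real.exp (-(h * t / 2)) ^ n := by
  have hu : 0 ≤ n * h * t := by positivity
  have hexp : Real.exp (n * h * t / 2) * Real.exp (-(n * h * t)) = Real.exp (-(h * t / 2)) ^ n := by
    rw [← Real.exp_add, ← Real.exp_nat_mul]
    ring_nf
  have hsplit : 1 + n * h ≤ (1 + t⁻¹) * (1 + n * h * t) := by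
    have : t⁻¹ * (n * h * t) = n * h := by field_simp
    nlinarith [inv_pos.mpr ht]
  calc (1 + n * h) ^ N * Real.exp (-(n * h * t))
      ≤ (1 + t⁻¹) ^ N * (1 + n * h * t) ^ N * Real.exp (-(n * h * t)) := by
        rw [← mul_pow]
        gcongr
    _ ≤ (1 + t⁻¹) ^ N * (2 ^ N * N ! * Real.exp (1 / 2) * Real.exp (n * h * t / 2)) *
          Real.exp (-(n * h * t)) := by
        gcongr
        exact one_add_pow_le_mul_exp_half N hu
    _ = 2 ^ N * N ! * Real.exp (1 / 2) * (1 + t⁻¹) ^ N * Real.exp (-(h * t / 2)) ^ n := by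
        rw [← hexp]
        ring

theorem summable_and_mul_tsum_one_add_mul_pow_mul_exp_neg_le (N : ℕ) {h t : ℝ} (hh₀ : 0 < h)
    (hh₁ : h ≤ 1) (ht : 0 < t) :
    Summable (fun n : ℕ => (1 + n * h) ^ N * Real.exp (-(n * h * t))) ∧
      h * ∑' n : ℕ, (1 + n * h) ^ N * Real.exp (-(n * h * t)) ≤
        2 * (2 ^ N * N ! * Real.exp (1 / 2)) * (1 + t⁻¹) ^ (N + 1) := by
  set D := 2 ^ N * N ! * Real.exp (1 / 2)
  set r := Real.exp (-(h * t / 2))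
  have hr₀ : 0 ≤ r := (Real.exp_pos _).le
  have hr₁ : r < 1 := Real.exp_lt_one_iff.mpr (by nlinarith)
  have hgeom : Summable fun n : ℕ => D * (1 + t⁻¹) ^ N * r ^ n :=
    (summable_geometric_of_lt_one hr₀ hr₁).mul_left _
  have hterm := one_add_mul_pow_mul_exp_neg_le N hh₀.le ht
  have hsum : Summable fun n : ℕ => (1 + n * h) ^ N * Real.exp (-(n * h * t)) :=
    hgeom.of_nonneg_of_le (fun n => by positivity) hterm
  refine ⟨hsum, ?_⟩
  calc h * ∑' n : ℕ, (1 + n * h) ^ N * Real.exp (-(n * h * t))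
      ≤ h * ∑' n : ℕ, D * (1 + t⁻¹) ^ N * r ^ n :=
        mul_le_mul_of_nonneg_left (hsum.tsum_le_tsum hterm hgeom) hh₀.le
    _ = h * (D * (1 + t⁻¹) ^ N * (1 - r)⁻¹) := by
        rw [tsum_mul_left, tsum_geometric_of_lt_one hr₀ hr₁]
    _ ≤ h * (D * (1 + t⁻¹) ^ N * (1 + (h * t / 2)⁻¹)) := by
        gcongr
        exact inv_one_sub_exp_neg_le (by positivity)
    _ = D * (1 + t⁻¹) ^ N * (h + 2 * t⁻¹) := by field_simp
    _ ≤ D * (1 + t⁻¹) ^ N * (2 * (1 + t⁻¹)) := by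
        gcongr
        nlinarith [inv_pos.mpr ht]
    _ = 2 * D * (1 + t⁻¹) ^ (N + 1) := by ring

theorem isUnit_one_sub_of_summable_norm_pow {R : Type*} [NormedRing R] [CompleteSpace R] {q : R}
    (hq : Summable fun n => ‖q ^ n‖) :
    IsUnit (1 - q) ∧ ‖Ring.inverse (1 - q)‖ ≤ ∑' n, ‖q ^ n‖ := by
  have hs : Summable fun n => q ^ n := hq.of_norm
  let u : Rˣ := ⟨1 - q, ∑' n, q ^ n, hs.one_sub_mul_tsum_pow, hs.tsum_pow_mul_one_sub⟩
  have hinv : Ring.inverse (1 - q) = ∑' n, q ^ n := Ring.inverse_unit u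
  refine ⟨u.isUnit, ?_⟩
  rw [hinv]
  exact norm_tsum_le_tsum_norm hq

section ExpSubOneDiv

variable {A : Type*} [NormedRing A] [NormedAlgebra ℚ A]

def expSubOneDiv (x : A) : A := ∑' n : ℕ, ((n + 1)! : ℚ)⁻¹ • x ^ n

theorem norm_factorial_succ_inv_smul_pow_le (x : A) (n : ℕ) :
    ‖((n + 1)! : ℚ)⁻¹ • x ^ n‖ ≤ max ‖(1 : A)‖ 1 * (‖x‖ ^ n / n !) := by
  have hpow : ‖x ^ n‖ ≤ max ‖(1 : A)‖ 1 * ‖x‖ ^ n := by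
    rcases n.eq_zero_or_pos with rfl | hn
    · simp
    · exact (norm_pow_le' x hn).trans (le_mul_of_one_le_left (by positivity) (le_max_right _ _))
  have hfact : ‖((n + 1)! : ℚ)⁻¹‖ ≤ (n ! : ℝ)⁻¹ := by
    rw [norm_inv, ← Rat.norm_cast_real, Rat.cast_natCast, Real.norm_natCast]
    exact inv_anti₀ (by positivity) (by exact_mod_cast Nat.factorial_le n.le_succ)
  calc ‖((n + 1)! : ℚ)⁻¹ • x ^ n‖ ≤ (n ! : ℝ)⁻¹ * (max ‖(1 : A)‖ 1 * ‖x‖ ^ n) := by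
        rw [norm_smul]
        gcongr
    _ = max ‖(1 : A)‖ 1 * (‖x‖ ^ n / n !) := by ring

theorem summable_norm_factorial_succ_inv_smul_pow (x : A) :
    Summable fun n : ℕ => ‖((n + 1)! : ℚ)⁻¹ • x ^ n‖ :=
  ((Real.summable_pow_div_factorial ‖x‖).mul_left _).of_nonneg_of_le (fun _ => norm_nonneg _)
    (norm_factorial_succ_inv_smul_pow_le x)

theorem norm_expSubOneDiv_le (x : A) : ‖expSubOneDiv x‖ ≤ max ‖(1 : A)‖ 1 * Real.exp ‖x‖ := by
  have hexp := (Real.summable_pow_div_factorial ‖x‖).mul_left (max ‖(1 : A)‖ 1)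
  calc ‖expSubOneDiv x‖ ≤ ∑' n : ℕ, ‖((n + 1)! : ℚ)⁻¹ • x ^ n‖ :=
        norm_tsum_le_tsum_norm (summable_norm_factorial_succ_inv_smul_pow x)
    _ ≤ ∑' n : ℕ, max ‖(1 : A)‖ 1 * (‖x‖ ^ n / n !) :=
        (summable_norm_factorial_succ_inv_smul_pow x).tsum_le_tsum
          (norm_factorial_succ_inv_smul_pow_le x) hexp
    _ = max ‖(1 : A)‖ 1 * Real.exp ‖x‖ := by
        rw [tsum_mul_left, Real.exp_eq_exp_ℝ, exp_eq_tsum_div]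

theorem commute_expSubOneDiv (x : A) : Commute x (expSubOneDiv x) :=
  Commute.tsum_right x fun n => ((Commute.refl x).pow_right n).smul_right _

theorem mul_expSubOneDiv [CompleteSpace A] (x : A) : x * expSubOneDiv x = exp x - 1 := by
  have hexp : exp x = 1 + ∑' n : ℕ, ((n + 1)! : ℚ)⁻¹ • x ^ (n + 1) := by
    rw [congrFun exp_eq_tsum_rat x, (expSeries_summable' (𝕂 := ℚ) x).tsum_eq_zero_add]
    simp
  rw [hexp, add_sub_cancel_left, expSubOneDiv,
    ← (summable_norm_factorial_succ_inv_smul_pow x).of_norm.tsum_mul_left]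
  simp only [mul_smul_comm, ← pow_succ']

theorem isUnit_of_summable_norm_exp_pow [CompleteSpace A] {x : A}
    (hx : Summable fun n => ‖exp x ^ n‖) :
    IsUnit x ∧ ‖Ring.inverse x‖ ≤ max ‖(1 : A)‖ 1 * Real.exp ‖x‖ * ∑' n, ‖exp x ^ n‖ := by
  obtain ⟨hunit, hnorm⟩ := isUnit_one_sub_of_summable_norm_pow hx
  have hfactor : x * -expSubOneDiv x = 1 - exp x := by
    rw [mul_neg, mul_expSubOneDiv, neg_sub]
  have hxunit : IsUnit x :=
    ((commute_expSubOneDiv x).neg_right.isUnit_mul_iff.mp (hfactor ▸ hunit)).1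
  have hinv : Ring.inverse x = -expSubOneDiv x * Ring.inverse (1 - exp x) := by
    rw [← mul_one (Ring.inverse x), Ring.inverse_mul_eq_iff_eq_mul _ _ _ hxunit, ← mul_assoc,
      hfactor, Ring.mul_inverse_cancel _ hunit]
  refine ⟨hxunit, ?_⟩
  rw [hinv, neg_mul, norm_neg]
  exact (norm_mul_le _ _).trans (by gcongr; exact norm_expSubOneDiv_le x)

end ExpSubOneDiv

section ComplexBanachAlgebra

variable {B : Type*} [NormedRing B] [NormedAlgebra ℂ B]

theorem HasPolynomialGrowth.exists_nat_exponent {b : B} (hb : HasPolynomialGrowth b) :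
    ∃ (K : ℝ) (N : ℕ), 0 < K ∧ ∀ s : ℝ, ‖exp ((I * s) • b)‖ ≤ K * (1 + |s|) ^ N := by
  obtain ⟨K, α, hK, -, hbound⟩ := hb
  refine ⟨K, ⌈α⌉₊, hK, fun s => (hbound s).trans ?_⟩
  rw [← Real.rpow_natCast]
  gcongr
  · linarith [abs_nonneg s]
  · exact Nat.le_ceil α

variable [CompleteSpace B]

theorem norm_exp_smul_sub_algebraMap (b : B) (lam : ℂ) (s : ℝ) :
    ‖exp ((I * s) • (b - algebraMap ℂ B lam))‖ = Real.exp (s * lam.im) * ‖exp ((I * s) • b)‖ := by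
  let +nondep : NormedAlgebra ℚ B := .restrictScalars ℚ ℂ B
  have hsplit : (I * s) • (b - algebraMap ℂ B lam) =
      (I * s) • b + algebraMap ℂ B (-(I * s * lam)) := by
    rw [Algebra.algebraMap_eq_smul_one, Algebra.algebraMap_eq_smul_one, smul_sub, smul_smul,
      neg_smul, sub_eq_add_neg]
  rw [hsplit, exp_add_of_commute (Algebra.commute_algebraMap_right _ _), ← algebraMap_exp_comm,
    ← Complex.exp_eq_exp_ℂ, Algebra.algebraMap_eq_smul_one, mul_smul_comm, mul_one, norm_smul,
    Complex.norm_exp]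
  congr 2
  simp [Complex.mul_re]

theorem exp_smul_pow (w : B) (s : ℝ) (n : ℕ) :
    exp ((I * s) • w) ^ n = exp ((I * (n * s : ℝ)) • w) := by
  let +nondep : NormedAlgebra ℚ B := .restrictScalars ℚ ℂ B
  rw [← exp_nsmul, ← Nat.cast_smul_eq_nsmul ℂ, smul_smul]
  push_cast
  ring_nf

theorem norm_exp_smul_sub_algebraMap_pow_le {b : B} {K : ℝ} {N : ℕ}
    (hb : ∀ s : ℝ, ‖exp ((I * s) • b)‖ ≤ K * (1 + |s|) ^ N) (lam : ℂ) (s₀ : ℝ) (n : ℕ) :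
    ‖exp ((I * s₀) • (b - algebraMap ℂ B lam)) ^ n‖ ≤
      K * ((1 + n * |s₀|) ^ N * Real.exp (n * (s₀ * lam.im))) := by
  rw [exp_smul_pow, norm_exp_smul_sub_algebraMap, mul_comm, mul_assoc (n : ℝ)]
  calc ‖exp ((I * (n * s₀ : ℝ)) • b)‖ * Real.exp (n * (s₀ * lam.im))
      ≤ K * (1 + |n * s₀|) ^ N * Real.exp (n * (s₀ * lam.im)) := by gcongr; exact hb _
    _ = K * ((1 + n * |s₀|) ^ N * Real.exp (n * (s₀ * lam.im))) := by
      rw [abs_mul, Nat.abs_cast, mul_assoc]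

theorem isUnit_and_norm_inverse_le_of_summable {w : B} {c : ℂ} (hc : c ≠ 0)
    (hw : Summable fun n => ‖exp (c • w) ^ n‖) :
    IsUnit w ∧ ‖Ring.inverse w‖ ≤
      ‖c‖ * (max ‖(1 : B)‖ 1 * Real.exp ‖c • w‖) * ∑' n, ‖exp (c • w) ^ n‖ := by
  let +nondep : NormedAlgebra ℚ B := .restrictScalars ℚ ℂ B
  obtain ⟨hx, hxinv⟩ := isUnit_of_summable_norm_exp_pow hw
  let u : Bˣ := ⟨w, c • Ring.inverse (c • w),
    by rw [mul_smul_comm, ← smul_mul_assoc, Ring.mul_inverse_cancel _ hx],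
    by rw [smul_mul_assoc, ← mul_smul_comm, Ring.inverse_mul_cancel _ hx]⟩
  have hinv : Ring.inverse w = c • Ring.inverse (c • w) := Ring.inverse_unit u
  refine ⟨u.isUnit, ?_⟩
  rw [hinv, norm_smul, mul_assoc]
  gcongr

theorem isUnit_sub_algebraMap_and_norm_inverse_le_of_step {b : B} {K : ℝ} {N : ℕ} (hK : 0 ≤ K)
    (hb : ∀ s : ℝ, ‖exp ((I * s) • b)‖ ≤ K * (1 + |s|) ^ N) {lam : ℂ} (hlam : lam.im ≠ 0)
    {s₀ : ℝ} (hs₀ : s₀ ≠ 0) (hs₀₁ : |s₀| ≤ 1) (hdecay : s₀ * lam.im = -(|s₀| * |lam.im|)) :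
    IsUnit (b - algebraMap ℂ B lam) ∧ ‖Ring.inverse (b - algebraMap ℂ B lam)‖ ≤
      max ‖(1 : B)‖ 1 * Real.exp ‖(I * s₀) • (b - algebraMap ℂ B lam)‖ * K *
        (2 * (2 ^ N * N ! * Real.exp (1 / 2))) * (1 + |lam.im|⁻¹) ^ (N + 1) := by
  set t := |lam.im|
  set h := |s₀|
  set x := (I * s₀) • (b - algebraMap ℂ B lam)
  have hpow : ∀ n : ℕ, ‖exp x ^ n‖ ≤ K * ((1 + n * h) ^ N * Real.exp (-(n * h * t))) := by
    intro n
    have hn := norm_exp_smul_sub_algebraMap_pow_le hb lam s₀ n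
    rwa [hdecay, mul_neg, ← mul_assoc (n : ℝ)] at hn
  obtain ⟨hsum, hsum_le⟩ := summable_and_mul_tsum_one_add_mul_pow_mul_exp_neg_le N
    (abs_pos.mpr hs₀) hs₀₁ (abs_pos.mpr hlam)
  have hx := (hsum.mul_left K).of_nonneg_of_le (fun n => norm_nonneg _) hpow
  have hc : ‖I * (s₀ : ℂ)‖ = h := by simp [h]
  have hc₀ : I * (s₀ : ℂ) ≠ 0 := mul_ne_zero Complex.I_ne_zero (by exact_mod_cast hs₀)
  obtain ⟨hunit, hinv⟩ := isUnit_and_norm_inverse_le_of_summable hc₀ hx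
  refine ⟨hunit, hinv.trans ?_⟩
  calc ‖I * (s₀ : ℂ)‖ * (max ‖(1 : B)‖ 1 * Real.exp ‖x‖) * ∑' n, ‖exp x ^ n‖
      ≤ h * (max ‖(1 : B)‖ 1 * Real.exp ‖x‖) *
          ∑' n : ℕ, K * ((1 + n * h) ^ N * Real.exp (-(n * h * t))) := by
        rw [hc]
        exact mul_le_mul_of_nonneg_left (hx.tsum_le_tsum hpow (hsum.mul_left K)) (by positivity)
    _ = max ‖(1 : B)‖ 1 * Real.exp ‖x‖ * K *
          (h * ∑' n : ℕ, (1 + n * h) ^ N * Real.exp (-(n * h * t))) := by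
        rw [tsum_mul_left]
        ring
    _ ≤ max ‖(1 : B)‖ 1 * Real.exp ‖x‖ * K *
          (2 * (2 ^ N * N ! * Real.exp (1 / 2)) * (1 + t⁻¹) ^ (N + 1)) := by gcongr
    _ = _ := by ring

theorem exists_abs_eq_and_mul_eq_neg_mul_abs {μ : ℝ} (hμ : μ ≠ 0) (h : ℝ) (hh : 0 ≤ h) :
    ∃ s₀ : ℝ, |s₀| = h ∧ s₀ * μ = -(|s₀| * |μ|) := by
  rcases hμ.lt_or_gt with hneg | hpos
  · exact ⟨h, abs_of_nonneg hh, by rw [abs_of_nonneg hh, abs_of_neg hneg]; ring⟩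
  · exact ⟨-h, by rw [abs_neg, abs_of_nonneg hh], by
      rw [abs_neg, abs_of_nonneg hh, abs_of_pos hpos]; ring⟩

theorem isUnit_sub_algebraMap_and_norm_inverse_le {b : B} {K : ℝ} {N : ℕ} (hK : 0 ≤ K)
    (hb : ∀ s : ℝ, ‖exp ((I * s) • b)‖ ≤ K * (1 + |s|) ^ N) {lam : ℂ} (hlam : lam.im ≠ 0) :
    IsUnit (b - algebraMap ℂ B lam) ∧ ‖Ring.inverse (b - algebraMap ℂ B lam)‖ ≤
      max ‖(1 : B)‖ 1 * Real.exp (‖b‖ + ‖(1 : B)‖) * K * (2 * (2 ^ N * N ! * Real.exp (1 / 2))) *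
        (1 + |lam.im|⁻¹) ^ (N + 1) := by
  obtain ⟨s₀, hs₀, hdecay⟩ :=
    exists_abs_eq_and_mul_eq_neg_mul_abs hlam (1 + ‖lam‖)⁻¹ (by positivity)
  have hs₀₁ : |s₀| ≤ 1 := hs₀ ▸ inv_le_one_of_one_le₀ (by linarith [norm_nonneg lam])
  have hs₀lam : |s₀| * ‖lam‖ ≤ 1 := by
    rw [hs₀, inv_mul_le_iff₀ (by positivity)]
    linarith
  have hx : ‖(I * s₀) • (b - algebraMap ℂ B lam)‖ ≤ ‖b‖ + ‖(1 : B)‖ := by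
    calc ‖(I * s₀) • (b - algebraMap ℂ B lam)‖ ≤ |s₀| * (‖b‖ + ‖lam‖ * ‖(1 : B)‖) := by
          rw [norm_smul, ← norm_algebraMap]
          simpa using mul_le_mul_of_nonneg_left (norm_sub_le _ _) (abs_nonneg s₀)
      _ ≤ ‖b‖ + ‖(1 : B)‖ := by nlinarith [norm_nonneg b, norm_nonneg (1 : B)]
  obtain ⟨hunit, hinv⟩ := isUnit_sub_algebraMap_and_norm_inverse_le_of_step hK hb hlam
    (abs_pos.mp (by rw [hs₀]; positivity)) hs₀₁ hdecay
  exact ⟨hunit, hinv.trans (by gcongr)⟩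

end ComplexBanachAlgebra

/-- (1) ⇒ (3) of the Colojoară–Foiaş type characterization: a polynomial growth element has
real spectrum and a polynomially bounded resolvent off the real axis. -/
theorem polynomialGrowth_spectrum_real_and_resolvent_bound
    {B : Type*} [NormedRing B] [NormedAlgebra ℂ B] [CompleteSpace B]
    (b : B) (hb : HasPolynomialGrowth b) :
    (∀ lam ∈ spectrum ℂ b, lam.im = 0) ∧
    ∃ C γ : ℝ, 0 < C ∧ 0 < γ ∧ ∀ lam : ℂ, lam.im ≠ 0 →
      IsUnit (b - algebraMap ℂ B lam) ∧
      ‖Ring.inverse (b - algebraMap ℂ B lam)‖ ≤ C * (1 + |lam.im|⁻¹) ^ γ := by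
  obtain ⟨K, N, hK, hbound⟩ := hb.exists_nat_exponent
  have hres := fun (lam : ℂ) (hlam : lam.im ≠ 0) =>
    isUnit_sub_algebraMap_and_norm_inverse_le hK.le hbound hlam
  refine ⟨fun lam hlam => ?_, max ‖(1 : B)‖ 1 * Real.exp (‖b‖ + ‖(1 : B)‖) * K *
    (2 * (2 ^ N * N ! * Real.exp (1 / 2))), (N + 1 : ℕ), by positivity, by positivity,
    fun lam hlam => ?_⟩
  · by_contra him
    rw [spectrum.mem_iff, ← neg_sub, IsUnit.neg_iff] at hlam
    exact hlam (hres lam him).1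
  · rw [Real.rpow_natCast]
    exact hres lam hlam
end
end

section
/- Let B be a complex unital Banach algebra and let b ∈ B be topologically nilpotent, i.e., lim_{n→∞} ‖bⁿ‖^{1/n} = 0 (equivalently, the spectral radius of b is 0). If b has polynomial growth, then b is nilpotent: there exists n ≥ 1 with bⁿ = 0. -/
/-!
Topological nilpotence gives `‖bⁿ‖ ≤ C εⁿ` for every `ε > 0`, so the entire function
`f z = exp (z • b)` has exponential type zero. Polynomial growth bounds `f` by `K (1 + |s|) ^ m`
on the imaginary axis, and the Phragmén–Lindelöf principle, applied to `f z / (z + 1) ^ m` in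
each half-plane, extends this polynomial bound to all of `ℂ`. Cauchy's estimates on large circles
then show that the Taylor coefficient `b ^ (m + 1) / (m + 1)!` of `f` vanishes.
-/

noncomputable section

open Complex Filter Asymptotics Metric
open scoped Nat Topology

theorem exists_norm_le_mul_pow_of_tendsto_rpow_inv {E : Type*} [SeminormedAddCommGroup E]
    {a : ℕ → E} (ha : Tendsto (fun n : ℕ => ‖a n‖ ^ ((n : ℝ)⁻¹)) atTop (𝓝 0))
    {ε : ℝ} (hε : 0 < ε) : ∃ C, ∀ n, ‖a n‖ ≤ C * ε ^ n := by
  have hev : ∀ᶠ n : ℕ in atTop, ‖a n‖ ≤ ‖ε ^ n‖ := by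
    filter_upwards [ha.eventually_lt_const hε, eventually_ne_atTop 0] with n hn hn0
    calc ‖a n‖ = (‖a n‖ ^ ((n : ℝ)⁻¹)) ^ n :=
          (Real.rpow_inv_natCast_pow (norm_nonneg _) hn0).symm
      _ ≤ ε ^ n := pow_le_pow_left₀ (by positivity) hn.le n
      _ ≤ ‖ε ^ n‖ := Real.le_norm_self _
  obtain ⟨C, -, hC⟩ := bound_of_isBigO_nat_atTop (IsBigO.of_bound' hev)
  refine ⟨C, fun n => ?_⟩
  simpa [abs_of_pos hε] using hC (pow_ne_zero n hε.ne')

theorem norm_exp_smul_le_of_norm_pow_le {𝕂 B : Type*} [RCLike 𝕂] [NormedRing B]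
    [NormedAlgebra 𝕂 B] [CompleteSpace B] {b : B} {C ε : ℝ} (h : ∀ n, ‖b ^ n‖ ≤ C * ε ^ n)
    (z : 𝕂) : ‖NormedSpace.exp (z • b)‖ ≤ C * Real.exp (ε * ‖z‖) := by
  have hexp : HasSum (fun n : ℕ => C * ((ε * ‖z‖) ^ n / n !)) (C * Real.exp (ε * ‖z‖)) := by
    rw [Real.exp_eq_exp_ℝ]
    exact (NormedSpace.expSeries_div_hasSum_exp (ε * ‖z‖)).mul_left C
  refine (NormedSpace.exp_series_hasSum_exp' (𝕂 := 𝕂) (z • b)).norm_le_of_bounded hexp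
    fun n => ?_
  rw [smul_pow, norm_smul, norm_smul, norm_pow, norm_inv, RCLike.norm_natCast]
  calc (n ! : ℝ)⁻¹ * (‖z‖ ^ n * ‖b ^ n‖) ≤ (n ! : ℝ)⁻¹ * (‖z‖ ^ n * (C * ε ^ n)) := by
        gcongr; exact h n
    _ = C * ((ε * ‖z‖) ^ n / n !) := by ring

theorem iteratedDeriv_exp_smul_const {𝕂 B : Type*} [RCLike 𝕂] [NormedRing B]
    [NormedAlgebra 𝕂 B] [CompleteSpace B] (b : B) (n : ℕ) :
    iteratedDeriv n (fun z : 𝕂 => NormedSpace.exp (z • b)) =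
      fun z => NormedSpace.exp (z • b) * b ^ n := by
  induction n with
  | zero => simp
  | succ n ih =>
    rw [iteratedDeriv_succ, ih]
    ext z
    rw [((hasDerivAt_exp_smul_const b z).mul_const (b ^ n)).deriv, mul_assoc, ← pow_succ']

section

variable {E : Type*} [NormedAddCommGroup E] [NormedSpace ℂ E]

theorem norm_le_of_re_nonneg_of_subexponential {f : ℂ → E} {C : ℝ}
    (hd : DiffContOnCl ℂ f {z | 0 < z.re})
    (hgrow : ∀ ε > 0, ∃ A, ∀ z : ℂ, 0 ≤ z.re → ‖f z‖ ≤ A * Real.exp (ε * ‖z‖))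
    (him : ∀ x : ℝ, ‖f (x * I)‖ ≤ C) {z : ℂ} (hz : 0 ≤ z.re) : ‖f z‖ ≤ C := by
  suffices ∀ᶠ ε : ℝ in 𝓝[<] 0, ‖cexp (ε * z) • f z‖ ≤ C by
    refine le_of_tendsto (Tendsto.mono_left ?_ nhdsWithin_le_nhds) this
    exact Continuous.tendsto' (by fun_prop) _ _ (by simp)
  -- The damping factor `exp (ε z)` makes the function bounded on the positive real axis.
  filter_upwards [self_mem_nhdsWithin] with ε (hε : ε < 0)
  have hgn : ∀ w : ℂ, ‖cexp (ε * w) • f w‖ = Real.exp (ε * w.re) * ‖f w‖ := fun w => by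
    rw [norm_smul, norm_exp, re_ofReal_mul]
  refine PhragmenLindelof.right_half_plane_of_bounded_on_real
    ((by fun_prop : Differentiable ℂ fun w : ℂ => cexp (ε * w)).diffContOnCl.smul hd)
    ?_ ?_ (fun x => ?_) hz
  · obtain ⟨A, hA⟩ := hgrow 1 one_pos
    refine ⟨1, one_lt_two, 1, IsBigO.of_bound A (eventually_inf_principal.2 <|
      Eventually.of_forall fun w (hw : 0 < w.re) => ?_)⟩
    rw [hgn, Real.rpow_one, Real.norm_of_nonneg (Real.exp_pos _).le]
    calc Real.exp (ε * w.re) * ‖f w‖ ≤ 1 * ‖f w‖ := by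
          gcongr; exact Real.exp_le_one_iff.2 (mul_nonpos_of_nonpos_of_nonneg hε.le hw.le)
      _ ≤ A * Real.exp (1 * ‖w‖) := by rw [one_mul]; exact hA w hw.le
  · obtain ⟨A, hA⟩ := hgrow (-ε) (neg_pos.2 hε)
    refine ⟨A, eventually_map.2 ?_⟩
    filter_upwards [eventually_ge_atTop 0] with x hx
    have hfx := hA x (by simpa using hx)
    rw [norm_real, Real.norm_of_nonneg hx] at hfx
    rw [hgn, ofReal_re]
    calc Real.exp (ε * x) * ‖f x‖ ≤ Real.exp (ε * x) * (A * Real.exp (-ε * x)) := by gcongr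
      _ = A := by rw [mul_left_comm, ← Real.exp_add]; simp
  · simpa [hgn] using him x

theorem one_le_norm_add_one {z : ℂ} (hz : 0 ≤ z.re) : 1 ≤ ‖z + 1‖ :=
  calc (1 : ℝ) ≤ (z + 1).re := by simpa using hz
    _ ≤ ‖z + 1‖ := re_le_norm _

theorem one_add_norm_le_two_mul_norm_add_one {z : ℂ} (hz : 0 ≤ z.re) :
    1 + ‖z‖ ≤ 2 * ‖z + 1‖ := by
  have h1 := one_le_norm_add_one hz
  have h2 : ‖z‖ ≤ ‖z + 1‖ := by
    rw [← sq_le_sq₀ (norm_nonneg _) (norm_nonneg _), Complex.sq_norm, Complex.sq_norm,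
      normSq_apply, normSq_apply]
    simp only [add_re, one_re, add_im, one_im, add_zero]
    nlinarith
  linarith

theorem norm_le_of_re_nonneg_of_norm_le_on_imaginary_axis {f : ℂ → E} (hd : Differentiable ℂ f)
    (hgrow : ∀ ε > 0, ∃ A, ∀ z : ℂ, ‖f z‖ ≤ A * Real.exp (ε * ‖z‖)) {K : ℝ} {m : ℕ}
    (him : ∀ s : ℝ, ‖f (s * I)‖ ≤ K * (1 + |s|) ^ m) {z : ℂ} (hz : 0 ≤ z.re) :
    ‖f z‖ ≤ 2 ^ m * K * (1 + ‖z‖) ^ m := by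
  have hK : 0 ≤ K := by simpa using (norm_nonneg _).trans (him 0)
  have hpos : ∀ w : ℂ, 0 ≤ w.re → 0 < ‖w + 1‖ := fun w hw =>
    one_pos.trans_le (one_le_norm_add_one hw)
  set g : ℂ → E := fun w => ((w + 1) ^ m)⁻¹ • f w
  have hgn : ∀ w : ℂ, ‖g w‖ = ‖f w‖ / ‖w + 1‖ ^ m := fun w => by
    simp [g, norm_smul, div_eq_inv_mul]
  have hg : ‖g z‖ ≤ 2 ^ m * K := by
    refine norm_le_of_re_nonneg_of_subexponential ?_ (fun ε hε => ?_) (fun s => ?_) hz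
    · refine DifferentiableOn.diffContOnCl fun w hw => ?_
      rw [closure_setOfPred_lt_re] at hw
      have hinv : DifferentiableAt ℂ (fun w : ℂ => ((w + 1) ^ m)⁻¹) w := by
        fun_prop (disch := exact pow_ne_zero _ (norm_pos_iff.1 (hpos w hw)))
      exact (hinv.smul (hd w)).differentiableWithinAt
    · obtain ⟨A, hA⟩ := hgrow ε hε
      refine ⟨A, fun w hw => ?_⟩
      rw [hgn]
      exact (div_le_self (norm_nonneg _) (one_le_pow₀ (one_le_norm_add_one hw))).trans (hA w)
    · have hs := one_add_norm_le_two_mul_norm_add_one (z := s * I) (by simp)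
      have hs0 := hpos (s * I) (by simp)
      rw [norm_mul, norm_I, mul_one, norm_real, Real.norm_eq_abs] at hs
      rw [hgn, div_le_iff₀ (by positivity)]
      calc ‖f (s * I)‖ ≤ K * (1 + |s|) ^ m := him s
        _ ≤ K * (2 * ‖s * I + 1‖) ^ m := by gcongr
        _ = 2 ^ m * K * ‖s * I + 1‖ ^ m := by ring
  calc ‖f z‖ = ‖g z‖ * ‖z + 1‖ ^ m := by
        rw [hgn, div_mul_cancel₀ _ (pow_pos (hpos z hz) m).ne']
    _ ≤ 2 ^ m * K * (1 + ‖z‖) ^ m := by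
      refine mul_le_mul hg (pow_le_pow_left₀ (norm_nonneg _) ?_ m) (by positivity)
        (mul_nonneg (by positivity) hK)
      simpa [add_comm] using norm_add_le z 1

theorem norm_le_of_norm_le_on_imaginary_axis {f : ℂ → E} (hd : Differentiable ℂ f)
    (hgrow : ∀ ε > 0, ∃ A, ∀ z : ℂ, ‖f z‖ ≤ A * Real.exp (ε * ‖z‖)) {K : ℝ} {m : ℕ}
    (him : ∀ s : ℝ, ‖f (s * I)‖ ≤ K * (1 + |s|) ^ m) (z : ℂ) :
    ‖f z‖ ≤ 2 ^ m * K * (1 + ‖z‖) ^ m := by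
  rcases le_total 0 z.re with hz | hz
  · exact norm_le_of_re_nonneg_of_norm_le_on_imaginary_axis hd hgrow him hz
  · have hgrow' : ∀ ε > 0, ∃ A, ∀ w : ℂ, ‖f (-w)‖ ≤ A * Real.exp (ε * ‖w‖) := fun ε hε =>
      (hgrow ε hε).imp fun A hA w => by simpa using hA (-w)
    have him' : ∀ s : ℝ, ‖f (-(s * I))‖ ≤ K * (1 + |s|) ^ m := fun s => by
      simpa using him (-s)
    simpa using norm_le_of_re_nonneg_of_norm_le_on_imaginary_axis (hd.comp differentiable_neg)
      hgrow' him' (z := -z) (by simpa using hz)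

theorem iteratedDeriv_succ_eq_zero_of_norm_le_mul_one_add_norm_pow [CompleteSpace E]
    {f : ℂ → E} (hd : Differentiable ℂ f) {C : ℝ} {m : ℕ}
    (hf : ∀ z, ‖f z‖ ≤ C * (1 + ‖z‖) ^ m) : iteratedDeriv (m + 1) f 0 = 0 := by
  have hC : 0 ≤ C := by simpa using (norm_nonneg _).trans (hf 0)
  have hR : ∀ R ≥ 1, ‖iteratedDeriv (m + 1) f 0‖ ≤ (m + 1)! * (2 ^ m * C) / R := by
    intro R hR
    have hR0 : 0 < R := one_pos.trans_le hR
    calc ‖iteratedDeriv (m + 1) f 0‖ ≤ (m + 1)! * (C * (1 + R) ^ m) / R ^ (m + 1) :=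
          norm_iteratedDeriv_le_of_forall_mem_sphere_norm_le (m + 1) hR0 hd.diffContOnCl
            fun z hz => by simpa [mem_sphere_zero_iff_norm.1 hz] using hf z
      _ ≤ (m + 1)! * (C * (2 * R) ^ m) / R ^ (m + 1) := by gcongr; linarith
      _ = (m + 1)! * (2 ^ m * C) / R := by field_simp; ring
  have hlim : Tendsto (fun R : ℝ => (m + 1)! * (2 ^ m * C) / R) atTop (𝓝 0) :=
    tendsto_const_nhds.div_atTop tendsto_id
  exact norm_le_zero_iff.1 (ge_of_tendsto hlim ((eventually_ge_atTop 1).mono hR))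

end

/-- A topologically nilpotent element of polynomial growth in a complex Banach algebra
is nilpotent. -/
theorem isNilpotent_of_topologicallyNilpotent_of_polynomialGrowth
    {B : Type*} [NormedRing B] [NormedAlgebra ℂ B] [CompleteSpace B] (b : B)
    (htop : Filter.Tendsto (fun n : ℕ => ‖b ^ n‖ ^ ((n : ℝ)⁻¹)) Filter.atTop (nhds 0))
    (hb : HasPolynomialGrowth b) :
    ∃ n : ℕ, 1 ≤ n ∧ b ^ n = 0 := by
  obtain ⟨K, α, hK, -, hKα⟩ := hb
  set m := ⌈α⌉₊
  have hgrow : ∀ ε > 0, ∃ A, ∀ z : ℂ, ‖NormedSpace.exp (z • b)‖ ≤ A * Real.exp (ε * ‖z‖) :=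
    fun ε hε => (exists_norm_le_mul_pow_of_tendsto_rpow_inv htop hε).imp fun _ hC =>
      norm_exp_smul_le_of_norm_pow_le hC
  have him : ∀ s : ℝ, ‖NormedSpace.exp (((s : ℂ) * I) • b)‖ ≤ K * (1 + |s|) ^ m := fun s =>
    calc ‖NormedSpace.exp (((s : ℂ) * I) • b)‖ ≤ K * (1 + |s|) ^ α := by
          simpa only [mul_comm] using hKα s
      _ ≤ K * (1 + |s|) ^ m := by
          rw [← Real.rpow_natCast]
          gcongr
          · linarith [abs_nonneg s]
          · exact Nat.le_ceil α
  have hdiff := differentiable_exp_smul_const ℂ b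
  have hpow := iteratedDeriv_succ_eq_zero_of_norm_le_mul_one_add_norm_pow hdiff
    (norm_le_of_norm_le_on_imaginary_axis hdiff hgrow him)
  refine ⟨m + 1, by omega, ?_⟩
  simpa [iteratedDeriv_exp_smul_const] using hpow
end
end

section
/- Let B be a complex unital Banach algebra and let b ∈ B have polynomial growth. Then the spectrum of b is contained in ℝ, i.e., every λ in the spectrum of b satisfies Im λ = 0. -/
/-! The spectral mapping inclusion `exp (σ a) ⊆ σ (exp a)` together with the bound
`‖μ‖ ≤ ‖a‖ ‖1‖` on spectral values gives `e^{-s Im λ} ≤ ‖exp (i s b)‖ ‖1‖` for every `λ ∈ σ b`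
and every real `s`. If `Im λ ≠ 0`, choosing the sign of `s` makes the left side grow
exponentially, which polynomial growth forbids. -/

noncomputable section

open Real

theorem not_forall_exp_mul_le_mul_one_add_rpow {c : ℝ} (hc : 0 < c) (C α : ℝ) :
    ¬ ∀ t : ℝ, 0 ≤ t → exp (c * t) ≤ C * (1 + t) ^ α := by
  intro h
  have hbdd : ∀ u : ℝ, 1 ≤ u → exp (c * u) / u ^ α ≤ C * exp c := by
    intro u hu
    rw [div_le_iff₀ (by positivity)]
    calc exp (c * u) = exp (c * (u - 1)) * exp c := by rw [← exp_add]; ring_nf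
      _ ≤ C * (1 + (u - 1)) ^ α * exp c := by gcongr; exact h (u - 1) (by linarith)
      _ = C * exp c * u ^ α := by ring_nf
  obtain ⟨u, hgt, hu⟩ := (((tendsto_exp_mul_div_rpow_atTop α c hc).eventually_gt_atTop
    (C * exp c)).and (Filter.eventually_ge_atTop 1)).exists
  exact (hbdd u hu).not_gt hgt

section BanachAlgebra

variable {B : Type*} [NormedRing B] [NormedAlgebra ℂ B] [CompleteSpace B]

theorem spectrum.exp_re_le_norm_exp_mul_norm_one {a : B} {μ : ℂ} (hμ : μ ∈ spectrum ℂ a) :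
    exp μ.re ≤ ‖NormedSpace.exp a‖ * ‖(1 : B)‖ := by
  rw [← Complex.norm_exp, Complex.exp_eq_exp_ℂ]
  exact spectrum.norm_le_norm_mul_of_mem (spectrum.exp_mem_exp a hμ)

theorem spectrum.exp_neg_mul_im_le {b : B} {lam : ℂ} (hlam : lam ∈ spectrum ℂ b) (s : ℝ) :
    exp (-(s * lam.im)) ≤ ‖NormedSpace.exp ((Complex.I * s) • b)‖ * ‖(1 : B)‖ := by
  have : Nontrivial B := not_subsingleton_iff_nontrivial.1 fun _ => by
    simp [spectrum.of_subsingleton] at hlam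
  have hmem : (Complex.I * s) * lam ∈ spectrum ℂ ((Complex.I * s) • b) := by
    rw [spectrum.smul_eq_smul _ _ ⟨lam, hlam⟩]
    exact Set.smul_mem_smul_set hlam
  simpa using spectrum.exp_re_le_norm_exp_mul_norm_one hmem

theorem HasPolynomialGrowth.exists_exp_neg_mul_im_le {b : B} (hb : HasPolynomialGrowth b)
    {lam : ℂ} (hlam : lam ∈ spectrum ℂ b) :
    ∃ C α : ℝ, ∀ s : ℝ, exp (-(s * lam.im)) ≤ C * (1 + |s|) ^ α := by
  obtain ⟨K, α, -, -, hK⟩ := hb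
  refine ⟨K * ‖(1 : B)‖, α, fun s => ?_⟩
  calc exp (-(s * lam.im)) ≤ ‖NormedSpace.exp ((Complex.I * s) • b)‖ * ‖(1 : B)‖ :=
        spectrum.exp_neg_mul_im_le hlam s
    _ ≤ K * (1 + |s|) ^ α * ‖(1 : B)‖ := by gcongr; exact hK s
    _ = K * ‖(1 : B)‖ * (1 + |s|) ^ α := by ring

end BanachAlgebra

/-- The spectrum of a polynomial growth element of a complex Banach algebra is real. -/
theorem spectrum_real_of_polynomialGrowth
    {B : Type*} [NormedRing B] [NormedAlgebra ℂ B] [CompleteSpace B]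
    (b : B) (hb : HasPolynomialGrowth b) :
    ∀ lam ∈ spectrum ℂ b, lam.im = 0 := by
  intro lam hlam
  obtain ⟨C, α, hC⟩ := hb.exists_exp_neg_mul_im_le hlam
  by_contra him
  rcases lt_or_gt_of_ne him with hneg | hpos
  · refine not_forall_exp_mul_le_mul_one_add_rpow (neg_pos.2 hneg) C α fun t ht => ?_
    simpa [abs_of_nonneg ht, mul_comm] using hC t
  · refine not_forall_exp_mul_le_mul_one_add_rpow hpos C α fun t ht => ?_
    simpa [abs_of_nonneg ht, mul_comm] using hC (-t)
end
end

section
/- Let B be a complex unital Banach algebra, let I ⊆ B be a two-sided ideal, and suppose there exists p ≥ 1 such that every product of p elements of I is zero. Let d ∈ B have polynomial growth and let t ∈ I. Then b = d + t has polynomial growth; in particular, the spectrum of b is contained in ℝ and b − λ·1 is invertible for every λ ∈ ℂ with Im λ ≠ 0. -/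
noncomputable section

/-!
Put `a = i d` and `c = i t`. The Dyson–Duhamel expansion writes `exp (s • (a + c))` as `∑ₖ Eₖ(s)`,
where `E₀(s) = exp (s • a)` and `Eₖ₊₁(s) = exp (s • a) * ∫₀ˢ exp (-u • a) * c * Eₖ(u) du`.
Each `Eₖ` grows at most polynomially in `|s|` because `exp (s • a)` does, and `Eₖ(s)` is killed on
the left by every product of `p - k` elements of the ideal; hence `c * Eₚ = 0`, the finite sum
`∑ₖ≤ₚ Eₖ` solves the linear ODE `g' = (a + c) g` with `g 0 = 1`, and so it equals
`exp (s • (a + c))`.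

If `z ∈ σ(b)` then `exp (i s z) ∈ σ(exp (i s b))`, so `e^(-s Im z) ≤ ‖1‖ ‖exp (i s b)‖`; a
polynomial bound on the right forces `Im z = 0`.
-/

open NormedSpace Filter Asymptotics

def PolynomiallyBounded {E : Type*} [Norm E] (f : ℝ → E) : Prop :=
  ∃ C : ℝ, ∃ n : ℕ, ∀ s, ‖f s‖ ≤ C * (1 + |s|) ^ n

lemma le_mul_one_add_abs_pow_of_le {x C s : ℝ} {n m : ℕ} (hx : 0 ≤ x)
    (h : x ≤ C * (1 + |s|) ^ n) (hnm : n ≤ m) : x ≤ C * (1 + |s|) ^ m := by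
  have hs : 1 ≤ 1 + |s| := le_add_of_nonneg_right (abs_nonneg s)
  have hC : 0 ≤ C := nonneg_of_mul_nonneg_left (hx.trans h) (by positivity)
  exact h.trans (by gcongr)

namespace PolynomiallyBounded

variable {E 𝔸 : Type*} [NormedAddCommGroup E] [NormedRing 𝔸]

lemma of_norm_le {F : Type*} [Norm F] {f : ℝ → E} {g : ℝ → F} (hf : PolynomiallyBounded f)
    {c : ℝ} (hc : 0 ≤ c) (h : ∀ s, ‖g s‖ ≤ c * ‖f s‖) : PolynomiallyBounded g := by
  obtain ⟨C, n, hC⟩ := hf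
  exact ⟨c * C, n, fun s => (h s).trans <| by
    rw [mul_assoc]; exact mul_le_mul_of_nonneg_left (hC s) hc⟩

lemma add {f g : ℝ → E} (hf : PolynomiallyBounded f) (hg : PolynomiallyBounded g) :
    PolynomiallyBounded fun s => f s + g s := by
  obtain ⟨C, n, hC⟩ := hf
  obtain ⟨D, m, hD⟩ := hg
  refine ⟨C + D, max n m, fun s => (norm_add_le _ _).trans ?_⟩
  rw [add_mul]
  exact add_le_add (le_mul_one_add_abs_pow_of_le (norm_nonneg _) (hC s) (le_max_left n m))
    (le_mul_one_add_abs_pow_of_le (norm_nonneg _) (hD s) (le_max_right n m))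

lemma sum {ι : Type*} (S : Finset ι) {f : ι → ℝ → E}
    (hf : ∀ i ∈ S, PolynomiallyBounded (f i)) :
    PolynomiallyBounded fun s => ∑ i ∈ S, f i s := by
  classical
  induction S using Finset.induction_on with
  | empty => exact ⟨0, 0, fun s => by simp⟩
  | insert i S hi ih =>
    simp only [Finset.sum_insert hi]
    exact (hf i (S.mem_insert_self i)).add (ih fun j hj => hf j (Finset.mem_insert_of_mem hj))

lemma comp_neg {f : ℝ → E} (hf : PolynomiallyBounded f) :
    PolynomiallyBounded fun s => f (-s) := by
  obtain ⟨C, n, hC⟩ := hf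
  exact ⟨C, n, fun s => by simpa using hC (-s)⟩

lemma mul {u v : ℝ → 𝔸} (hu : PolynomiallyBounded u) (hv : PolynomiallyBounded v) :
    PolynomiallyBounded fun s => u s * v s := by
  obtain ⟨C, n, hC⟩ := hu
  obtain ⟨D, m, hD⟩ := hv
  refine ⟨C * D, n + m, fun s => (norm_mul_le _ _).trans ?_⟩
  calc ‖u s‖ * ‖v s‖ ≤ C * (1 + |s|) ^ n * (D * (1 + |s|) ^ m) :=
        mul_le_mul (hC s) (hD s) (norm_nonneg _) ((norm_nonneg _).trans (hC s))
    _ = C * D * (1 + |s|) ^ (n + m) := by ring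

lemma const_mul {v : ℝ → 𝔸} (c : 𝔸) (hv : PolynomiallyBounded v) :
    PolynomiallyBounded fun s => c * v s :=
  hv.of_norm_le (norm_nonneg c) fun _ => norm_mul_le _ _

lemma primitive [NormedSpace ℝ E] {f : ℝ → E} (hf : PolynomiallyBounded f) :
    PolynomiallyBounded fun s => ∫ u in (0 : ℝ)..s, f u := by
  obtain ⟨C, n, hC⟩ := hf
  have hC0 : 0 ≤ C := by simpa using (norm_nonneg _).trans (hC 0)
  refine ⟨C, n + 1, fun s => ?_⟩
  have hbound : ∀ u ∈ Set.uIoc 0 s, ‖f u‖ ≤ C * (1 + |s|) ^ n := fun u hu => by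
    have hus : |u| ≤ |s| := by
      simpa using Set.abs_sub_left_of_mem_uIcc (Set.uIoc_subset_uIcc hu)
    exact (hC u).trans (by gcongr)
  calc ‖∫ u in (0 : ℝ)..s, f u‖ ≤ C * (1 + |s|) ^ n * |s - 0| :=
        intervalIntegral.norm_integral_le_of_norm_le_const hbound
    _ ≤ C * (1 + |s|) ^ n * (1 + |s|) := by
        rw [sub_zero]; gcongr; exact le_add_of_nonneg_left zero_le_one
    _ = C * (1 + |s|) ^ (n + 1) := by ring

end PolynomiallyBounded

lemma not_polynomiallyBounded_exp_mul {μ : ℝ} (hμ : μ ≠ 0) :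
    ¬ PolynomiallyBounded fun s => Real.exp (μ * s) := by
  wlog hμ₀ : 0 < μ generalizing μ
  · intro h
    refine this (neg_ne_zero.2 hμ) (neg_pos.2 (lt_of_le_of_ne (not_lt.1 hμ₀) hμ)) ?_
    simpa using h.comp_neg
  rintro ⟨C, n, hC⟩
  have hbig : (fun s => Real.exp (μ * s)) =O[atTop] fun s : ℝ => s ^ n := by
    refine IsBigO.of_bound (C * 2 ^ n) ?_
    filter_upwards [eventually_ge_atTop 1] with s hs
    have hs0 : 0 ≤ s := zero_le_one.trans hs
    have hC0 : 0 ≤ C := by simpa using (norm_nonneg _).trans (hC 0)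
    calc ‖Real.exp (μ * s)‖ ≤ C * (1 + |s|) ^ n := by simpa using hC s
      _ ≤ C * (2 * s) ^ n := by rw [abs_of_nonneg hs0]; gcongr; linarith
      _ = C * 2 ^ n * ‖s ^ n‖ := by
        rw [Real.norm_eq_abs, abs_of_nonneg (by positivity), mul_pow, mul_assoc]
  exact (isLittleO_pow_exp_pos_mul_atTop n hμ₀).not_isBigO
    (Eventually.frequently (by filter_upwards [eventually_gt_atTop 0] with s hs; positivity)) hbig

section Duhamel

variable {𝔸 : Type*} [NormedRing 𝔸] [NormedAlgebra ℝ 𝔸] (a c : 𝔸)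

def duhamelTerm : ℕ → ℝ → 𝔸
  | 0, s => exp (s • a)
  | k + 1, s => exp (s • a) * ∫ u in (0 : ℝ)..s, exp ((-u) • a) * (c * duhamelTerm k u)

lemma duhamelTerm_apply_zero (k : ℕ) : duhamelTerm a c k 0 = if k = 0 then 1 else 0 := by
  cases k <;> simp [duhamelTerm]

variable {a} in
lemma polynomiallyBounded_duhamelTerm (ha : PolynomiallyBounded fun s : ℝ => exp (s • a))
    (k : ℕ) : PolynomiallyBounded (duhamelTerm a c k) := by
  induction k with
  | zero => exact ha
  | succ k ih => exact ha.mul ((ha.comp_neg.mul (ih.const_mul c)).primitive)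

variable [CompleteSpace 𝔸]

lemma exp_smul_mul_exp_neg_smul (s : ℝ) : exp (s • a) * exp ((-s) • a) = 1 := by
  let +nondep : NormedAlgebra ℚ 𝔸 := .restrictScalars ℚ ℝ 𝔸
  rw [← exp_add_of_commute (((Commute.refl a).smul_left s).smul_right (-s)), ← add_smul,
    add_neg_cancel, zero_smul, exp_zero]

variable {a} in
lemma eq_exp_smul_mul_of_hasDerivAt {g : ℝ → 𝔸} (hg : ∀ s, HasDerivAt g (a * g s) s) (s : ℝ) :
    g s = exp (s • a) * g 0 := by
  have hexp : ∀ s : ℝ, HasDerivAt (fun s => exp (s • a) * g 0) (a * (exp (s • a) * g 0)) s :=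
    fun s => by simpa [mul_assoc] using (hasDerivAt_exp_smul_const' a s).mul_const (g 0)
  let L := ContinuousLinearMap.mul ℝ 𝔸 a
  exact congrFun (ODE_solution_unique_univ (v := fun _ => L) (s := fun _ => Set.univ) (t₀ := 0)
    (fun _ => L.lipschitz.lipschitzOnWith) (fun s => ⟨hg s, trivial⟩)
    (fun s => ⟨hexp s, trivial⟩) (by simp)) s

lemma continuous_exp_smul : Continuous fun s : ℝ => exp (s • a) :=
  (differentiable_exp_smul_const ℝ a).continuous

lemma continuous_duhamelTerm_integrand {f : ℝ → 𝔸} (hf : Continuous f) :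
    Continuous fun u : ℝ => exp ((-u) • a) * (c * f u) :=
  ((continuous_exp_smul a).comp continuous_neg).mul (continuous_const.mul hf)

lemma continuous_duhamelTerm (k : ℕ) : Continuous (duhamelTerm a c k) := by
  induction k with
  | zero => exact continuous_exp_smul a
  | succ k ih =>
    exact (continuous_exp_smul a).mul (intervalIntegral.continuous_primitive
      (fun _ _ => (continuous_duhamelTerm_integrand a c ih).intervalIntegrable _ _) 0)

lemma hasDerivAt_duhamelTerm_succ (k : ℕ) (s : ℝ) :
    HasDerivAt (duhamelTerm a c (k + 1))
      (a * duhamelTerm a c (k + 1) s + c * duhamelTerm a c k s) s := by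
  have hint := continuous_duhamelTerm_integrand a c (continuous_duhamelTerm a c k)
  have hprim := intervalIntegral.integral_hasDerivAt_right
    (hint.intervalIntegrable (μ := MeasureTheory.volume) 0 s)
    hint.aestronglyMeasurable.stronglyMeasurableAtFilter hint.continuousAt
  have h := (hasDerivAt_exp_smul_const' a s).mul hprim
  rw [← mul_assoc (exp (s • a)), exp_smul_mul_exp_neg_smul, one_mul, mul_assoc] at h
  exact h

lemma hasDerivAt_sum_duhamelTerm {q : ℕ} (hq : ∀ s, c * duhamelTerm a c q s = 0) (s : ℝ) :
    HasDerivAt (fun s => ∑ k ∈ Finset.range (q + 1), duhamelTerm a c k s)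
      ((a + c) * ∑ k ∈ Finset.range (q + 1), duhamelTerm a c k s) s := by
  have h₀ : HasDerivAt (duhamelTerm a c 0) (a * duhamelTerm a c 0 s) s :=
    hasDerivAt_exp_smul_const' a s
  have hsplit : (fun s => ∑ k ∈ Finset.range (q + 1), duhamelTerm a c k s) =
      fun s => ∑ k ∈ Finset.range q, duhamelTerm a c (k + 1) s + duhamelTerm a c 0 s :=
    funext fun s => Finset.sum_range_succ' _ q
  rw [hsplit]
  refine ((HasDerivAt.fun_sum fun k _ => hasDerivAt_duhamelTerm_succ a c k s).add h₀
    ).congr_deriv ?_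
  rw [add_mul, Finset.mul_sum, Finset.mul_sum, Finset.sum_range_succ' (fun k => a * _),
    Finset.sum_range_succ (fun k => c * _), hq, add_zero, Finset.sum_add_distrib]
  abel

lemma exp_smul_add_eq_sum_duhamelTerm {q : ℕ} (hq : ∀ s, c * duhamelTerm a c q s = 0)
    (s : ℝ) : exp (s • (a + c)) = ∑ k ∈ Finset.range (q + 1), duhamelTerm a c k s := by
  rw [eq_exp_smul_mul_of_hasDerivAt (hasDerivAt_sum_duhamelTerm a c hq) s]
  simp [duhamelTerm_apply_zero]

end Duhamel

lemma List.prod_eq_zero_of_le_length {M : Type*} [MonoidWithZero M] {S : Set M} {p : ℕ}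
    (hnil : ∀ r : Fin p → M, (∀ i, r i ∈ S) → (List.ofFn r).prod = 0) {l : List M}
    (hl : ∀ x ∈ l, x ∈ S) (hp : p ≤ l.length) : l.prod = 0 := by
  obtain ⟨l₁, l₂, rfl, rfl⟩ : ∃ l₁ l₂, l = l₁ ++ l₂ ∧ l₁.length = p :=
    ⟨l.take p, l.drop p, (l.take_append_drop p).symm, List.length_take_of_le hp⟩
  have h₁ : l₁.prod = 0 := by
    simpa using hnil l₁.get fun i => hl _ (List.mem_append_left _ (List.get_mem _ _))
  rw [List.prod_append, h₁, zero_mul]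

section Nilpotent

variable {𝔸 : Type*} [NormedRing 𝔸] [NormedAlgebra ℝ 𝔸] [CompleteSpace 𝔸] {a c : 𝔸}
  {J : Ideal 𝔸} {p : ℕ}

lemma prod_mul_duhamelTerm_eq_zero
    (hnil : ∀ r : Fin p → 𝔸, (∀ i, r i ∈ J) → (List.ofFn r).prod = 0) (hc : c ∈ J) (k : ℕ) :
    ∀ l : List 𝔸, (∀ x ∈ l, x ∈ J) → p ≤ l.length + k →
      ∀ s, l.prod * duhamelTerm a c k s = 0 := by
  induction k with
  | zero =>
    intro l hl hp s
    rw [List.prod_eq_zero_of_le_length hnil hl hp, zero_mul]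
  | succ k ih =>
    intro l hl hp s
    have hint := continuous_duhamelTerm_integrand a c (continuous_duhamelTerm a c k)
    -- `exp (s • a) * exp ((-u) • a) * c ∈ J` joins `l` as one more factor
    have hzero : ∀ u : ℝ,
        l.prod * exp (s • a) * (exp ((-u) • a) * (c * duhamelTerm a c k u)) = 0 := by
      intro u
      have := ih (l ++ [exp (s • a) * exp ((-u) • a) * c])
        (by
          simp only [List.mem_append, List.mem_singleton]
          rintro x (hx | rfl)
          exacts [hl x hx, J.mul_mem_left _ hc]) (by simp; omega) u
      simpa [List.prod_append, mul_assoc] using this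
    have h := (ContinuousLinearMap.mul ℝ 𝔸 (l.prod * exp (s • a))).intervalIntegral_comp_comm
      (hint.intervalIntegrable (μ := MeasureTheory.volume) 0 s)
    simp only [ContinuousLinearMap.mul_apply', hzero, intervalIntegral.integral_zero] at h
    rw [duhamelTerm, ← mul_assoc, ← h]

theorem polynomiallyBounded_exp_smul_add
    (hnil : ∀ r : Fin p → 𝔸, (∀ i, r i ∈ J) → (List.ofFn r).prod = 0)
    (ha : PolynomiallyBounded fun s : ℝ => exp (s • a)) (hc : c ∈ J) :
    PolynomiallyBounded fun s : ℝ => exp (s • (a + c)) := by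
  have hq : ∀ s, c * duhamelTerm a c p s = 0 := fun s => by
    simpa using prod_mul_duhamelTerm_eq_zero hnil hc p [c] (by simpa) (by simp) s
  simp_rw [exp_smul_add_eq_sum_duhamelTerm a c hq]
  exact PolynomiallyBounded.sum _ fun k _ => polynomiallyBounded_duhamelTerm c ha k

end Nilpotent

section Complex

variable {B : Type*} [NormedRing B] [NormedAlgebra ℂ B]

lemma hasPolynomialGrowth_iff_polynomiallyBounded (b : B) :
    HasPolynomialGrowth b ↔ PolynomiallyBounded fun s : ℝ => exp (s • Complex.I • b) := by
  simp only [HasPolynomialGrowth, PolynomiallyBounded, mul_comm Complex.I, mul_smul,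
    Complex.coe_smul]
  constructor
  · rintro ⟨K, α, hK, -, h⟩
    refine ⟨K, ⌈α⌉₊, fun s => (h s).trans ?_⟩
    rw [← Real.rpow_natCast]
    gcongr
    · exact le_add_of_nonneg_right (abs_nonneg s)
    · exact Nat.le_ceil α
  · rintro ⟨C, n, h⟩
    refine ⟨max C 1, n, by positivity, by positivity, fun s => ?_⟩
    rw [Real.rpow_natCast]
    exact (h s).trans (by gcongr; exact le_max_left C 1)

lemma HasPolynomialGrowth.im_eq_zero_of_mem_spectrum [CompleteSpace B] {b : B}
    (hb : HasPolynomialGrowth b) {z : ℂ} (hz : z ∈ spectrum ℂ b) : z.im = 0 := by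
  by_contra him
  have : Nontrivial B := not_subsingleton_iff_nontrivial.1 fun _ => by
    simp [spectrum.of_subsingleton] at hz
  refine not_polynomiallyBounded_exp_mul (neg_ne_zero.2 him) <|
    ((hasPolynomialGrowth_iff_polynomiallyBounded b).1 hb).of_norm_le (norm_nonneg (1 : B))
      fun s => ?_
  have hmem : exp ((s * Complex.I) * z) ∈ spectrum ℂ (exp (s • Complex.I • b)) := by
    rw [← Complex.coe_smul, smul_smul]
    exact spectrum.exp_mem_exp _ (spectrum.smul_eq_smul _ _ ⟨z, hz⟩ ▸ Set.smul_mem_smul_set hz)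
  calc ‖Real.exp (-z.im * s)‖ = ‖exp ((s * Complex.I) * z)‖ := by
        rw [← Complex.exp_eq_exp_ℂ, Complex.norm_exp, Real.norm_of_nonneg (Real.exp_pos _).le]
        simp [mul_comm]
    _ ≤ ‖exp (s • Complex.I • b)‖ * ‖(1 : B)‖ := spectrum.norm_le_norm_mul_of_mem hmem
    _ = ‖(1 : B)‖ * ‖exp (s • Complex.I • b)‖ := mul_comm _ _

end Complex

theorem hasPolynomialGrowth_add_of_mem_nilpotent_ideal_general
    {B : Type*} [NormedRing B] [NormedAlgebra ℂ B] [CompleteSpace B]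
    (I : TwoSidedIdeal B) (p : ℕ)
    (hnil : ∀ r : Fin p → B, (∀ i, r i ∈ I) → (List.ofFn r).prod = 0)
    (d t : B) (hd : HasPolynomialGrowth d) (ht : t ∈ I) :
    HasPolynomialGrowth (d + t) ∧
    (∀ lam ∈ spectrum ℂ (d + t), lam.im = 0) ∧
    ∀ lam : ℂ, lam.im ≠ 0 → IsUnit (d + t - algebraMap ℂ B lam) := by
  have hIt : Complex.I • t ∈ I.asIdeal := by
    rw [TwoSidedIdeal.mem_asIdeal, Algebra.smul_def]
    exact I.mul_mem_left _ _ ht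
  have hgrowth : HasPolynomialGrowth (d + t) := by
    rw [hasPolynomialGrowth_iff_polynomiallyBounded, smul_add]
    exact polynomiallyBounded_exp_smul_add hnil
      ((hasPolynomialGrowth_iff_polynomiallyBounded d).1 hd) hIt
  have hspec : ∀ lam ∈ spectrum ℂ (d + t), lam.im = 0 :=
    fun _ => hgrowth.im_eq_zero_of_mem_spectrum
  refine ⟨hgrowth, hspec, fun lam hlam => ?_⟩
  simpa using (spectrum.notMem_iff.1 fun h => hlam (hspec lam h)).neg

/-- A perturbation of a polynomial growth element by an element of a nilpotent two-sided ideal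
has polynomial growth; in particular it has real spectrum and its resolvent exists off ℝ. -/
theorem hasPolynomialGrowth_add_of_mem_nilpotent_ideal
    {B : Type*} [NormedRing B] [NormedAlgebra ℂ B] [CompleteSpace B]
    (I : TwoSidedIdeal B) (p : ℕ) (hp : 1 ≤ p)
    (hnil : ∀ r : Fin p → B, (∀ i, r i ∈ I) → (List.ofFn r).prod = 0)
    (d t : B) (hd : HasPolynomialGrowth d) (ht : t ∈ I) :
    HasPolynomialGrowth (d + t) ∧
    (∀ lam ∈ spectrum ℂ (d + t), lam.im = 0) ∧
    ∀ lam : ℂ, lam.im ≠ 0 → IsUnit (d + t - algebraMap ℂ B lam) :=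
  hasPolynomialGrowth_add_of_mem_nilpotent_ideal_general I p hnil d t hd ht
end
end

section
/- Let m ≥ 1, n ∈ ℕ, let f : ℝᵐ → ℝ be n times continuously differentiable (ContDiff of order n), and let K ⊆ ℝᵐ be a compact set. Then there exists C > 0 such that for every s ∈ ℝ, every x ∈ K, and every natural number j ≤ n, the j-th iterated Fréchet derivative of the function x ↦ exp(i·s·f(x)) (with values in ℂ) satisfies ‖D^j (exp(i s f))(x)‖ ≤ C·(1+|s|)ⁿ. -/
/-!
Write `exp (i s f) = g_s ∘ f` with `g_s t = exp (i s t)` on `ℝ`. Every derivative of `g_s` has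
modulus `|s|^k ≤ (1 + |s|)^n`, the derivatives of `f` up to order `n` are bounded on `K`, and the
Faà di Bruno bound for the derivatives of a composition combines the two.
-/

open Complex Filter Nat

theorem iteratedDeriv_cexp_const_mul_ofReal (c : ℂ) (k : ℕ) :
    iteratedDeriv k (fun t : ℝ => cexp (c * t)) = fun t : ℝ => c ^ k * cexp (c * t) := by
  induction k with
  | zero => simp
  | succ k ih =>
    funext t
    have hderiv : HasDerivAt (fun t : ℝ => cexp (c * t)) (cexp (c * t) * c) t := by
      simpa using ((hasDerivAt_id (t : ℂ)).const_mul c).cexp.comp_ofReal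
    rw [iteratedDeriv_succ, ih, ((hderiv.const_mul (c ^ k)).deriv)]
    ring

theorem norm_iteratedFDeriv_cexp_I_mul_ofReal (s t : ℝ) (k : ℕ) :
    ‖iteratedFDeriv ℝ k (fun u : ℝ => cexp (I * s * u)) t‖ = |s| ^ k := by
  rw [norm_iteratedFDeriv_eq_norm_iteratedDeriv, iteratedDeriv_cexp_const_mul_ofReal,
    norm_mul, norm_pow, norm_exp]
  simp

theorem ContDiff.exists_bound_iteratedFDeriv_of_isCompact {𝕜 E F : Type*}
    [NontriviallyNormedField 𝕜] [NormedAddCommGroup E] [NormedSpace 𝕜 E]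
    [NormedAddCommGroup F] [NormedSpace 𝕜 F] {f : E → F} {n : ℕ} (hf : ContDiff 𝕜 n f)
    {K : Set E} (hK : IsCompact K) :
    ∃ D, 1 ≤ D ∧ ∀ x ∈ K, ∀ i ≤ n, ‖iteratedFDeriv 𝕜 i f x‖ ≤ D := by
  have hbound : ∀ i : Fin (n + 1), ∀ᶠ D in atTop, ∀ x ∈ K, ‖iteratedFDeriv 𝕜 i f x‖ ≤ D := by
    intro i
    have hcont := hf.continuous_iteratedFDeriv (m := i) (by exact_mod_cast i.is_le)
    obtain ⟨D, hD⟩ := hK.exists_bound_of_continuousOn hcont.continuousOn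
    filter_upwards [eventually_ge_atTop D] with D' hD' x hx
    exact (hD x hx).trans hD'
  obtain ⟨D, hD1, hD⟩ := ((eventually_ge_atTop 1).and (eventually_all.2 hbound)).exists
  exact ⟨D, hD1, fun x hx i hi => hD ⟨i, by omega⟩ x hx⟩

theorem iteratedFDeriv_exp_smul_real_poly_bound_general
    (m n : ℕ)
    (f : EuclideanSpace ℝ (Fin m) → ℝ) (hf : ContDiff ℝ n f)
    (K : Set (EuclideanSpace ℝ (Fin m))) (hK : IsCompact K) :
    ∃ C : ℝ, 0 < C ∧ ∀ s : ℝ, ∀ x ∈ K, ∀ j : ℕ, j ≤ n →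
      ‖iteratedFDeriv ℝ j
          (fun y : EuclideanSpace ℝ (Fin m) => Complex.exp (Complex.I * (s : ℂ) * (f y : ℂ))) x‖
        ≤ C * (1 + |s|) ^ n := by
  obtain ⟨D, hD1, hD⟩ := hf.exists_bound_iteratedFDeriv_of_isCompact hK
  refine ⟨n ! * D ^ n, by positivity, fun s x hx j hj => ?_⟩
  set g : ℝ → ℂ := fun t => cexp (I * s * t)
  have hg : ContDiff ℝ n g := (contDiff_const.mul ofRealCLM.contDiff).cexp
  have hg_bound : ∀ i ≤ j, ‖iteratedFDeriv ℝ i g (f x)‖ ≤ (1 + |s|) ^ n := by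
    intro i hi
    rw [norm_iteratedFDeriv_cexp_I_mul_ofReal]
    calc |s| ^ i ≤ (1 + |s|) ^ i := by gcongr; linarith
      _ ≤ (1 + |s|) ^ n := pow_le_pow_right₀ (by linarith [abs_nonneg s]) (hi.trans hj)
  have hf_bound : ∀ i, 1 ≤ i → i ≤ j → ‖iteratedFDeriv ℝ i f x‖ ≤ D ^ i := fun i h1 hi =>
    (hD x hx i (hi.trans hj)).trans (le_self_pow₀ hD1 (by omega))
  calc ‖iteratedFDeriv ℝ j (g ∘ f) x‖ ≤ j ! * (1 + |s|) ^ n * D ^ j :=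
        norm_iteratedFDeriv_comp_le hg hf (by exact_mod_cast hj) x hg_bound hf_bound
    _ ≤ n ! * (1 + |s|) ^ n * D ^ n := by gcongr
    _ = n ! * D ^ n * (1 + |s|) ^ n := by ring

/-- Derivative estimate showing that `Cⁿ(K)` is a Banach algebra of polynomial growth:
for real-valued `f` of class `Cⁿ`, the iterated derivatives of `x ↦ exp(i s f(x))` on a
compact set grow at most polynomially in `s`. -/
theorem iteratedFDeriv_exp_smul_real_poly_bound
    (m n : ℕ) (hm : 1 ≤ m)
    (f : EuclideanSpace ℝ (Fin m) → ℝ) (hf : ContDiff ℝ n f)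
    (K : Set (EuclideanSpace ℝ (Fin m))) (hK : IsCompact K) :
    ∃ C : ℝ, 0 < C ∧ ∀ s : ℝ, ∀ x ∈ K, ∀ j : ℕ, j ≤ n →
      ‖iteratedFDeriv ℝ j
          (fun y : EuclideanSpace ℝ (Fin m) => Complex.exp (Complex.I * (s : ℂ) * (f y : ℂ))) x‖
        ≤ C * (1 + |s|) ^ n :=
  iteratedFDeriv_exp_smul_real_poly_bound_general m n f hf K hK
end

section
/- Let B be a complex unital Banach algebra, let m ≥ 1, and let b₁, …, b_m ∈ B each have polynomial growth. Then for every Schwartz function g : ℝᵐ → ℂ, the B-valued function s = (s₁,…,s_m) ↦ g(s) • (exp(i s₁ b₁) · exp(i s₂ b₂) · … · exp(i s_m b_m)) (with the factors multiplied in increasing order of the index) is Bochner integrable on ℝᵐ with respect to Lebesgue measure. -/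
noncomputable section

open MeasureTheory

theorem HasPolynomialGrowth.exists_pow_bound {B : Type*} [NormedRing B] [NormedAlgebra ℂ B]
    {b : B} (hb : HasPolynomialGrowth b) :
    ∃ K : ℝ, 0 ≤ K ∧ ∃ N : ℕ,
      ∀ s : ℝ, ‖NormedSpace.exp ((Complex.I * (s : ℂ)) • b)‖ ≤ K * (1 + |s|) ^ N := by
  obtain ⟨K, α, hK, -, hbound⟩ := hb
  -- `⌈α⌉₊` works because the base `1 + |s|` is at least `1`.
  refine ⟨K, hK.le, ⌈α⌉₊, fun s => (hbound s).trans ?_⟩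
  rw [← Real.rpow_natCast]
  gcongr
  · linarith [abs_nonneg s]
  · exact Nat.le_ceil α

/-- `‖1‖` may differ from `1` here (no `NormOneClass`); it only enters through the empty product. -/
theorem List.norm_prod_le_max_norm_one_mul {B : Type*} [SeminormedRing B] (l : List B) :
    ‖l.prod‖ ≤ max ‖(1 : B)‖ 1 * (l.map norm).prod := by
  rcases l with _ | ⟨a, l⟩
  · simp
  · refine (List.norm_prod_le' (List.cons_ne_nil a l)).trans (le_mul_of_one_le_left ?_ ?_)
    · exact List.prod_nonneg fun x hx => by
        obtain ⟨y, -, rfl⟩ := List.mem_map.1 hx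
        exact norm_nonneg y
    · exact le_max_right _ _

theorem norm_prod_ofFn_le {B : Type*} [SeminormedRing B] {n : ℕ} (f : Fin n → B) :
    ‖(List.ofFn f).prod‖ ≤ max ‖(1 : B)‖ 1 * ∏ j, ‖f j‖ := by
  simpa only [List.map_ofFn, List.prod_ofFn, Function.comp_apply]
    using List.norm_prod_le_max_norm_one_mul (List.ofFn f)

theorem SchwartzMap.integrable_smul_of_norm_le_mul_one_add_norm_pow
    {D 𝕜 B : Type*} [NormedAddCommGroup D] [NormedSpace ℝ D] [MeasurableSpace D] [BorelSpace D]
    [SecondCountableTopology D] [RCLike 𝕜] [NormedAddCommGroup B] [NormedSpace 𝕜 B]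
    (μ : Measure D) [μ.HasTemperateGrowth] (g : SchwartzMap D 𝕜) {F : D → B}
    (hF : AEStronglyMeasurable F μ) {C : ℝ} {N : ℕ} (hbound : ∀ x, ‖F x‖ ≤ C * (1 + ‖x‖) ^ N) :
    Integrable (fun x => g x • F x) μ := by
  have hC : 0 ≤ C := by simpa using (norm_nonneg _).trans (hbound 0)
  refine Integrable.mono' (((g.integrable (μ := μ)).norm.add (g.integrable_pow_mul μ N)).const_mul
    (C * 2 ^ (N - 1))) (g.continuous.aestronglyMeasurable.smul hF) (.of_forall fun x => ?_)
  have hpow : (1 + ‖x‖) ^ N ≤ 2 ^ (N - 1) * (1 + ‖x‖ ^ N) := by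
    simpa using add_pow_le zero_le_one (norm_nonneg x) N
  calc ‖g x • F x‖ = ‖g x‖ * ‖F x‖ := norm_smul _ _
    _ ≤ ‖g x‖ * (C * (2 ^ (N - 1) * (1 + ‖x‖ ^ N))) :=
      mul_le_mul_of_nonneg_left ((hbound x).trans (mul_le_mul_of_nonneg_left hpow hC))
        (norm_nonneg _)
    _ = C * 2 ^ (N - 1) * (‖g x‖ + ‖x‖ ^ N * ‖g x‖) := by ring

section OrderedExp

variable {B : Type*} [NormedRing B] [NormedAlgebra ℂ B] {m : ℕ}

def orderedExpProd (b : Fin m → B) (s : EuclideanSpace ℝ (Fin m)) : B :=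
  (List.ofFn fun j : Fin m => NormedSpace.exp ((Complex.I * (s j : ℂ)) • b j)).prod

theorem continuous_orderedExpProd [CompleteSpace B] (b : Fin m → B) :
    Continuous (orderedExpProd b) := by
  -- `NormedSpace.exp_continuous` would need a `NormedAlgebra ℚ B` instance.
  have hexp : Continuous (NormedSpace.exp : B → B) :=
    continuous_iff_continuousAt.2 fun x => (NormedSpace.exp_analytic (𝕂 := ℂ) x).continuousAt
  have hfactor (j : Fin m) : Continuous fun s : EuclideanSpace ℝ (Fin m) =>
      NormedSpace.exp ((Complex.I * (s j : ℂ)) • b j) := by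
    fun_prop
  unfold orderedExpProd
  simpa only [List.ofFn_eq_map] using continuous_list_prod (List.finRange m) fun j _ => hfactor j

theorem exists_norm_orderedExpProd_le {b : Fin m → B} (hb : ∀ j, HasPolynomialGrowth (b j)) :
    ∃ C : ℝ, ∃ N : ℕ, ∀ s, ‖orderedExpProd b s‖ ≤ C * (1 + ‖s‖) ^ N := by
  choose K hK N hN using fun j => (hb j).exists_pow_bound
  refine ⟨max ‖(1 : B)‖ 1 * ∏ j, K j, ∑ j, N j, fun s => (norm_prod_ofFn_le _).trans ?_⟩
  rw [mul_assoc, ← Finset.prod_pow_eq_pow_sum, ← Finset.prod_mul_distrib]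
  gcongr with j
  refine (hN j (s j)).trans (mul_le_mul_of_nonneg_left ?_ (hK j))
  gcongr
  simpa only [Real.norm_eq_abs] using PiLp.norm_apply_le s j

end OrderedExp

theorem integrable_schwartz_smul_ordered_exp_prod_general
    {B : Type*} [NormedRing B] [NormedAlgebra ℂ B] [CompleteSpace B]
    (m : ℕ) (b : Fin m → B) (hb : ∀ j, HasPolynomialGrowth (b j))
    (g : SchwartzMap (EuclideanSpace ℝ (Fin m)) ℂ) :
    Integrable (fun s : EuclideanSpace ℝ (Fin m) =>
      g s • (List.ofFn fun j : Fin m =>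
        NormedSpace.exp ((Complex.I * (s j : ℂ)) • b j)).prod) := by
  obtain ⟨C, N, hbound⟩ := exists_norm_orderedExpProd_le hb
  exact g.integrable_smul_of_norm_le_mul_one_add_norm_pow volume
    (continuous_orderedExpProd b).aestronglyMeasurable hbound

/-- Well-definedness of the ordered C^∞ functional calculus integral: for polynomial growth
elements `b₁, …, b_m` and a Schwartz function `g`, the function
`s ↦ g(s) • exp(i s₁ b₁) ⋯ exp(i s_m b_m)` is Bochner integrable. -/
theorem integrable_schwartz_smul_ordered_exp_prod
    {B : Type*} [NormedRing B] [NormedAlgebra ℂ B] [CompleteSpace B]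
    (m : ℕ) (hm : 1 ≤ m) (b : Fin m → B) (hb : ∀ j, HasPolynomialGrowth (b j))
    (g : SchwartzMap (EuclideanSpace ℝ (Fin m)) ℂ) :
    Integrable (fun s : EuclideanSpace ℝ (Fin m) =>
      g s • (List.ofFn fun j : Fin m =>
        NormedSpace.exp ((Complex.I * (s j : ℂ)) • b j)).prod) :=
  integrable_schwartz_smul_ordered_exp_prod_general m b hb g
end
end

section
/- Let B be a complex unital Banach algebra, let m ≥ 1, and let b₁, …, b_m ∈ B be pairwise commuting elements, each of polynomial growth. For a Schwartz function f : ℝᵐ → ℂ define T(f) = ∫_{ℝᵐ} (𝓕f)(ξ) • exp( 2π i (ξ₁ b₁ + … + ξ_m b_m) ) dξ, where 𝓕f(ξ) = ∫ f(x) e^{−2πi⟨x,ξ⟩} dx is the Fourier transform; this Bochner integral converges for every Schwartz f. Then T is multiplicative on Schwartz functions: if f, g, h are Schwartz functions with h(x) = f(x)·g(x) for all x ∈ ℝᵐ, then T(h) = T(f)·T(g). -/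
noncomputable section

open MeasureTheory

/-- The C^∞ functional calculus of a commuting tuple, on a Schwartz function `f`:
`T f = ∫ (𝓕 f)(ξ) • exp(2πi (ξ₁ b₁ + ⋯ + ξ_m b_m)) dξ` (2π-convention Fourier transform). -/
def smoothCalc {B : Type*} [NormedRing B] [NormedAlgebra ℂ B] [CompleteSpace B]
    (m : ℕ) (b : Fin m → B) (f : SchwartzMap (EuclideanSpace ℝ (Fin m)) ℂ) : B :=
  ∫ ξ : EuclideanSpace ℝ (Fin m),
    (FourierTransform.fourier (⇑f) ξ) •
      NormedSpace.exp ((2 * (Real.pi : ℂ) * Complex.I) • ∑ j, (ξ j : ℂ) • b j)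

/-!
With `e ξ = exp (2πi (ξ₁ b₁ + ⋯ + ξ_m b_m))`, commutativity of the `bⱼ` makes `e` a homomorphism
from `(ℝᵐ, +)` to `(B, *)`, and their polynomial growth gives `‖e ξ‖ ≤ C (1 + ‖ξ‖)ᴺ`, so `𝓕 f • e`
is integrable for every Schwartz `f`. The Fourier transform of `f * g` is `𝓕 f ⋆ 𝓕 g`, and since `e`
is multiplicative, `(𝓕 f ⋆ 𝓕 g) • e = (𝓕 f • e) ⋆ (𝓕 g • e)`; the integral of a convolution is the
product of the integrals.
-/

open Complex ContinuousLinearMap FourierTransform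
open scoped Convolution

theorem NormedSpace.norm_exp_sum_le_of_commute {𝔸 ι : Type*} [NormedRing 𝔸] [NormedAlgebra ℚ 𝔸]
    [CompleteSpace 𝔸] (s : Finset ι) (a : ι → 𝔸)
    (h : ∀ i ∈ s, ∀ j ∈ s, Commute (a i) (a j)) :
    ‖exp (∑ i ∈ s, a i)‖ ≤ ‖(1 : 𝔸)‖ * ∏ i ∈ s, ‖exp (a i)‖ := by
  classical
  induction s using Finset.induction_on with
  | empty => simp [exp_zero]
  | insert i s hi ih =>
    have hcomm : Commute (a i) (∑ j ∈ s, a j) :=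
      .sum_right _ _ _ fun j hj => h i (s.mem_insert_self i) j (s.mem_insert_of_mem hj)
    rw [Finset.sum_insert hi, exp_add_of_commute hcomm, Finset.prod_insert hi]
    calc ‖exp (a i) * exp (∑ j ∈ s, a j)‖
        ≤ ‖exp (a i)‖ * (‖(1 : 𝔸)‖ * ∏ j ∈ s, ‖exp (a j)‖) :=
          (norm_mul_le _ _).trans <| by
            gcongr
            exact ih fun k hk l hl => h k (s.mem_insert_of_mem hk) l (s.mem_insert_of_mem hl)
      _ = ‖(1 : 𝔸)‖ * (‖exp (a i)‖ * ∏ j ∈ s, ‖exp (a j)‖) := by ring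

theorem SchwartzMap.integrable_smul_of_norm_le {D F : Type*} [NormedAddCommGroup D]
    [NormedSpace ℝ D] [MeasurableSpace D] [BorelSpace D] [SecondCountableTopology D]
    {μ : Measure D} [μ.HasTemperateGrowth] [NormedAddCommGroup F] [NormedSpace ℂ F]
    (φ : SchwartzMap D ℂ) {g : D → F} (hg : AEStronglyMeasurable g μ) {C : ℝ} {N : ℕ}
    (hbound : ∀ x, ‖g x‖ ≤ C * (1 + ‖x‖) ^ N) :
    Integrable (fun x => φ x • g x) μ := by
  have hdom : Integrable (fun x => (1 + ‖x‖) ^ N * ‖φ x‖) μ := by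
    simp_rw [add_comm (1 : ℝ), add_pow, one_pow, mul_one, Finset.sum_mul]
    exact integrable_finsetSum _ fun k _ => by
      simpa only [mul_right_comm] using (φ.integrable_pow_mul μ k).mul_const (N.choose k : ℝ)
  refine (hdom.const_mul C).mono' ((φ.continuous.aestronglyMeasurable (μ := μ)).smul hg) ?_
  filter_upwards with x
  calc ‖φ x • g x‖ = ‖φ x‖ * ‖g x‖ := norm_smul _ _
    _ ≤ ‖φ x‖ * (C * (1 + ‖x‖) ^ N) := by gcongr; exact hbound x
    _ = C * ((1 + ‖x‖) ^ N * ‖φ x‖) := by ring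

theorem integral_convolution_smul_eq_mul {G 𝔸 : Type*} [AddCommGroup G] [MeasurableSpace G]
    [MeasurableAdd₂ G] [MeasurableNeg G] {μ : Measure G} [SFinite μ] [μ.IsAddRightInvariant]
    [NormedRing 𝔸] [NormedAlgebra ℂ 𝔸] [CompleteSpace 𝔸]
    {e : G → 𝔸} (he : ∀ x y, e (x + y) = e x * e y) {φ ψ : G → ℂ}
    (hφ : Integrable (fun x => φ x • e x) μ) (hψ : Integrable (fun x => ψ x • e x) μ) :
    ∫ x, (φ ⋆[mul ℂ ℂ, μ] ψ) x • e x ∂μ = (∫ x, φ x • e x ∂μ) * ∫ x, ψ x • e x ∂μ := by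
  have hconv : ∀ x, (φ ⋆[mul ℂ ℂ, μ] ψ) x • e x =
      ((fun x => φ x • e x) ⋆[mul ℂ 𝔸, μ] fun x => ψ x • e x) x := fun x => by
    simp only [convolution_def, mul_apply', ← integral_smul_const]
    congr 1 with t
    rw [smul_mul_smul_comm, ← he, add_sub_cancel]
  simp_rw [hconv]
  exact integral_convolution (mul ℂ 𝔸) hφ hψ

theorem SchwartzMap.fourier_fourier_apply {V E : Type*} [NormedAddCommGroup V]
    [InnerProductSpace ℝ V] [FiniteDimensional ℝ V] [MeasurableSpace V] [BorelSpace V]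
    [NormedAddCommGroup E] [NormedSpace ℂ E] [CompleteSpace E] (f : SchwartzMap V E) (x : V) :
    𝓕 (𝓕 f) x = f (-x) := by
  conv_rhs => rw [← fourierInv_fourier_eq (F := SchwartzMap V E) f]
  rw [fourierInv_apply_eq]
  simp

theorem SchwartzMap.fourier_mul_eq_convolution {V : Type*} [NormedAddCommGroup V]
    [InnerProductSpace ℝ V] [FiniteDimensional ℝ V] [MeasurableSpace V] [BorelSpace V]
    (f g h : SchwartzMap V ℂ)
    (hfg : ∀ x, h x = f x * g x) :
    𝓕 (h : V → ℂ) = 𝓕 (f : V → ℂ) ⋆[mul ℂ ℂ] 𝓕 (g : V → ℂ) := by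
  have key : convolution (mul ℂ ℂ) (𝓕 f) (𝓕 g) = 𝓕 h := by
    apply (fourierEquiv ℂ (SchwartzMap V ℂ)).injective
    ext x
    simp [fourier_convolution, pairing_apply_apply, fourier_fourier_apply, hfg]
  ext ξ
  rw [← fourier_coe, ← key, convolution_apply, fourier_coe, fourier_coe]

theorem HasPolynomialGrowth.exists_norm_exp_le_pow {B : Type*} [NormedRing B] [NormedAlgebra ℂ B]
    {b : B} (hb : HasPolynomialGrowth b) :
    ∃ K : ℝ, ∃ N : ℕ, 0 ≤ K ∧ ∀ s : ℝ, ‖NormedSpace.exp ((I * s) • b)‖ ≤ K * (1 + |s|) ^ N := by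
  obtain ⟨K, α, hK, -, hbound⟩ := hb
  refine ⟨K, ⌈α⌉₊, hK.le, fun s => (hbound s).trans ?_⟩
  gcongr
  rw [← Real.rpow_natCast]
  exact Real.rpow_le_rpow_of_exponent_le (by simp [abs_nonneg]) (Nat.le_ceil α)

section TupleExp

variable {ι B : Type*} [Fintype ι] [NormedRing B] [NormedAlgebra ℂ B] [CompleteSpace B]

def tupleExp (b : ι → B) (ξ : EuclideanSpace ℝ ι) : B :=
  NormedSpace.exp ((2 * (Real.pi : ℂ) * I) • ∑ j, (ξ j : ℂ) • b j)

theorem continuous_tupleExp (b : ι → B) : Continuous (tupleExp b) := by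
  let : NormedAlgebra ℚ B := .restrictScalars ℚ ℂ B
  exact NormedSpace.exp_continuous.comp (by fun_prop)

theorem tupleExp_add {b : ι → B} (hcomm : ∀ i j, Commute (b i) (b j))
    (ξ η : EuclideanSpace ℝ ι) : tupleExp b (ξ + η) = tupleExp b ξ * tupleExp b η := by
  let : NormedAlgebra ℚ B := .restrictScalars ℚ ℂ B
  have hc : Commute (∑ j, (ξ j : ℂ) • b j) (∑ j, (η j : ℂ) • b j) :=
    .sum_left _ _ _ fun i _ => .sum_right _ _ _ fun j _ =>
      ((hcomm i j).smul_left _).smul_right _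
  rw [tupleExp, tupleExp, tupleExp, ← NormedSpace.exp_add_of_commute
    ((hc.smul_left _).smul_right _), ← smul_add, ← Finset.sum_add_distrib]
  simp only [PiLp.add_apply, ofReal_add, add_smul]

theorem norm_tupleExp_le {b : ι → B} (hb : ∀ j, HasPolynomialGrowth (b j))
    (hcomm : ∀ i j, Commute (b i) (b j)) :
    ∃ C : ℝ, ∃ N : ℕ, ∀ ξ, ‖tupleExp b ξ‖ ≤ C * (1 + ‖ξ‖) ^ N := by
  let : NormedAlgebra ℚ B := .restrictScalars ℚ ℂ B
  choose K N hK hbound using fun j => (hb j).exists_norm_exp_le_pow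
  refine ⟨‖(1 : B)‖ * ∏ j, K j * (1 + 2 * Real.pi) ^ N j, ∑ j, N j, fun ξ => ?_⟩
  have hfactor : ∀ j, ‖NormedSpace.exp ((I * ↑(2 * Real.pi * ξ j)) • b j)‖ ≤
      K j * (1 + 2 * Real.pi) ^ N j * (1 + ‖ξ‖) ^ N j := fun j => by
    have hcoord : |ξ j| ≤ ‖ξ‖ := PiLp.norm_apply_le ξ j
    calc _ ≤ K j * (1 + |2 * Real.pi * ξ j|) ^ N j := hbound j _
      _ ≤ K j * ((1 + 2 * Real.pi) * (1 + ‖ξ‖)) ^ N j := by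
          gcongr _ * ?_ ^ _
          · exact hK j
          rw [abs_mul, abs_of_pos Real.two_pi_pos]
          nlinarith [Real.two_pi_pos, abs_nonneg (ξ j)]
      _ = _ := by rw [mul_pow, mul_assoc]
  have hsum : tupleExp b ξ = NormedSpace.exp (∑ j, (I * ↑(2 * Real.pi * ξ j)) • b j) := by
    simp only [tupleExp, Finset.smul_sum, smul_smul]
    congr! 3 with j
    push_cast
    ring
  calc ‖tupleExp b ξ‖
      ≤ ‖(1 : B)‖ * ∏ j, ‖NormedSpace.exp ((I * ↑(2 * Real.pi * ξ j)) • b j)‖ := by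
        rw [hsum]
        exact NormedSpace.norm_exp_sum_le_of_commute _ _ fun i _ j _ =>
          ((hcomm i j).smul_left _).smul_right _
    _ ≤ ‖(1 : B)‖ * ∏ j, (K j * (1 + 2 * Real.pi) ^ N j * (1 + ‖ξ‖) ^ N j) := by
        gcongr with j
        exact hfactor j
    _ = _ := by rw [Finset.prod_mul_distrib, Finset.prod_pow_eq_pow_sum, mul_assoc]

theorem integrable_fourier_smul_tupleExp {b : ι → B} (hb : ∀ j, HasPolynomialGrowth (b j))
    (hcomm : ∀ i j, Commute (b i) (b j)) (f : SchwartzMap (EuclideanSpace ℝ ι) ℂ) :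
    Integrable fun ξ => 𝓕 (⇑f) ξ • tupleExp b ξ := by
  obtain ⟨C, N, hbound⟩ := norm_tupleExp_le hb hcomm
  exact (𝓕 f).integrable_smul_of_norm_le (continuous_tupleExp b).aestronglyMeasurable hbound

end TupleExp

theorem smoothCalc_integrable_and_multiplicative_general
    {B : Type*} [NormedRing B] [NormedAlgebra ℂ B] [CompleteSpace B]
    (m : ℕ) (b : Fin m → B)
    (hb : ∀ j, HasPolynomialGrowth (b j)) (hcomm : ∀ i j, Commute (b i) (b j)) :
    (∀ f : SchwartzMap (EuclideanSpace ℝ (Fin m)) ℂ,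
      Integrable (fun ξ : EuclideanSpace ℝ (Fin m) =>
        (FourierTransform.fourier (⇑f) ξ) •
          NormedSpace.exp ((2 * (Real.pi : ℂ) * Complex.I) • ∑ j, (ξ j : ℂ) • b j))) ∧
    (∀ f g h : SchwartzMap (EuclideanSpace ℝ (Fin m)) ℂ,
      (∀ x, h x = f x * g x) →
        smoothCalc m b h = smoothCalc m b f * smoothCalc m b g) := by
  have hint : ∀ f : SchwartzMap (EuclideanSpace ℝ (Fin m)) ℂ,
      Integrable fun ξ => 𝓕 (⇑f) ξ • tupleExp b ξ :=
    integrable_fourier_smul_tupleExp hb hcomm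
  refine ⟨hint, fun f g h hfg => ?_⟩
  rw [smoothCalc, SchwartzMap.fourier_mul_eq_convolution f g h hfg]
  exact integral_convolution_smul_eq_mul (tupleExp_add hcomm) (hint f) (hint g)

/-- For pairwise commuting polynomial growth elements, the integral defining the functional
calculus converges for every Schwartz function, and the calculus is multiplicative. -/
theorem smoothCalc_integrable_and_multiplicative
    {B : Type*} [NormedRing B] [NormedAlgebra ℂ B] [CompleteSpace B]
    (m : ℕ) (hm : 1 ≤ m) (b : Fin m → B)
    (hb : ∀ j, HasPolynomialGrowth (b j)) (hcomm : ∀ i j, Commute (b i) (b j)) :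
    (∀ f : SchwartzMap (EuclideanSpace ℝ (Fin m)) ℂ,
      Integrable (fun ξ : EuclideanSpace ℝ (Fin m) =>
        (FourierTransform.fourier (⇑f) ξ) •
          NormedSpace.exp ((2 * (Real.pi : ℂ) * Complex.I) • ∑ j, (ξ j : ℂ) • b j))) ∧
    (∀ f g h : SchwartzMap (EuclideanSpace ℝ (Fin m)) ℂ,
      (∀ x, h x = f x * g x) →
        smoothCalc m b h = smoothCalc m b f * smoothCalc m b g) :=
  smoothCalc_integrable_and_multiplicative_general m b hb hcomm
end
end

section
/- Let B be a complex unital Banach algebra, let m ≥ 1, and let b₁, …, b_m ∈ B be nilpotent elements (for each j there is n_j with b_j^{n_j} = 0). Let f : ℝᵐ → ℂ be a Schwartz function all of whose iterated derivatives vanish at the origin (i.e., the k-th iterated Fréchet derivative of f at 0 is 0 for every k ∈ ℕ, including f(0) = 0). Then ∫_{ℝᵐ} (𝓕f)(ξ) • ( exp(2πi ξ₁ b₁)·exp(2πi ξ₂ b₂)·…·exp(2πi ξ_m b_m) ) dξ = 0, where the factors are multiplied in increasing order of the index and 𝓕f(ξ) = ∫ f(x) e^{−2πi⟨x,ξ⟩}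 dx is the Fourier transform. -/
/-!
Expanding the exponential of each nilpotent `b j` into its finite Taylor sum turns the integrand
into `𝓕 f ξ • p ξ`, where `p` lies in the `ℂ`-algebra spanned by the functions
`ξ ↦ σ_y(ξ) • e`, with `σ_y(ξ) = ∏ i, 2πi ⟪ξ, y i⟫` the Fourier symbol of the iterated line
derivative `∂^y`. As `σ_y • 𝓕 f = 𝓕 (∂^y f)`, Fourier inversion at the origin gives
`∫ σ_y • 𝓕 f = ∂^y f 0 = 0`, and the integral is linear in `p`.
-/

noncomputable section

open MeasureTheory SchwartzMap LineDeriv Complex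
open scoped FourierTransform RealInnerProductSpace Real

section Fourier

variable {V : Type*} [NormedAddCommGroup V] [InnerProductSpace ℝ V]

def lineDerivSymbol {n : ℕ} (y : Fin n → V) (ξ : V) : ℂ := ∏ i, 2 * π * I * ⟪ξ, y i⟫

theorem lineDerivSymbol_append {n k : ℕ} (y : Fin n → V) (z : Fin k → V) (ξ : V) :
    lineDerivSymbol (Fin.append y z) ξ = lineDerivSymbol y ξ * lineDerivSymbol z ξ := by
  simp [lineDerivSymbol, Fin.prod_univ_add]

variable [FiniteDimensional ℝ V] [MeasurableSpace V] [BorelSpace V]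
  {E : Type*} [NormedAddCommGroup E] [NormedSpace ℂ E]

theorem fourier_iteratedLineDerivOp_apply {n : ℕ} (y : Fin n → V) (g : 𝓢(V, E)) (ξ : V) :
    𝓕 (⇑(∂^{y} g)) ξ = lineDerivSymbol y ξ • 𝓕 (⇑g) ξ := by
  induction n generalizing g with
  | zero => simp [lineDerivSymbol]
  | succ n ih =>
    have hinner : (inner ℝ · (y 0)).HasTemperateGrowth :=
      ((innerSL ℝ).flip (y 0)).hasTemperateGrowth
    rw [iteratedLineDerivOp_succ_left, ← fourier_coe, fourier_lineDerivOp_eq]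
    simp only [smulLeftCLM_apply_apply hinner, smul_apply, fourier_coe, ih, lineDerivSymbol,
      Fin.prod_univ_succ, ← Complex.coe_smul, smul_smul, Fin.tail]
    ring_nf

theorem integral_fourier_eq_apply_zero [CompleteSpace E] (g : 𝓢(V, E)) :
    ∫ ξ, 𝓕 (⇑g) ξ = g 0 := by
  have hinv := congr($(FourierTransform.fourierInv_fourier_eq (F := 𝓢(V, E)) g) 0)
  rw [fourierInv_coe, fourier_coe, Real.fourierInv_eq] at hinv
  simpa using hinv

end Fourier

theorem NormedSpace.exp_eq_sum_range_of_pow_eq_zero (𝕂 : Type*) {𝔸 : Type*} [Field 𝕂]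
    [CharZero 𝕂] [Ring 𝔸] [Algebra 𝕂 𝔸] [TopologicalSpace 𝔸] [IsTopologicalRing 𝔸] {x : 𝔸} {n : ℕ}
    (hx : x ^ n = 0) : NormedSpace.exp x = ∑ k ∈ Finset.range n, (k.factorial⁻¹ : 𝕂) • x ^ k := by
  rw [NormedSpace.exp_eq_tsum 𝕂]
  refine tsum_eq_sum fun k hk => ?_
  rw [pow_eq_zero_of_le (by simpa using hk) hx, smul_zero]

section Polynomial

variable (V : Type*) [NormedAddCommGroup V] [InnerProductSpace ℝ V]
  (B : Type*) [Ring B] [Algebra ℂ B]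

def symbolMonomials : Submonoid (V → B) where
  carrier := {p | ∃ (n : ℕ) (y : Fin n → V) (e : B), p = fun ξ => lineDerivSymbol y ξ • e}
  one_mem' := ⟨0, Fin.elim0, 1, by ext; simp [lineDerivSymbol]⟩
  mul_mem' := by
    rintro _ _ ⟨n, y, e, rfl⟩ ⟨k, z, e', rfl⟩
    exact ⟨n + k, Fin.append y z, e * e', by
      ext ξ; simp only [Pi.mul_apply, smul_mul_smul_comm, lineDerivSymbol_append]⟩

variable {V B}

theorem exp_smul_mem_adjoin_symbolMonomials [TopologicalSpace B] [IsTopologicalRing B] (v : V)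
    {b : B} (hb : IsNilpotent b) :
    (fun ξ => NormedSpace.exp ((2 * π * I * ⟪ξ, v⟫) • b)) ∈
      Algebra.adjoin ℂ (symbolMonomials V B : Set (V → B)) := by
  obtain ⟨n, hn⟩ := hb
  have hexp : ∀ ξ : V, NormedSpace.exp ((2 * π * I * ⟪ξ, v⟫) • b) = ∑ k ∈ Finset.range n,
      (k.factorial⁻¹ : ℂ) • (lineDerivSymbol (fun _ : Fin k => v) ξ • b ^ k) := fun ξ => by
    rw [NormedSpace.exp_eq_sum_range_of_pow_eq_zero ℂ (by rw [smul_pow, hn, smul_zero])]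
    simp [lineDerivSymbol, smul_pow]
  simp_rw [hexp, ← Finset.sum_fn]
  exact Subalgebra.sum_mem _ fun k _ => Subalgebra.smul_mem _
    (Algebra.subset_adjoin (show _ ∈ symbolMonomials V B from ⟨k, _, b ^ k, rfl⟩)) _

end Polynomial

section Vanishing

variable {V : Type*} [NormedAddCommGroup V] [InnerProductSpace ℝ V] [FiniteDimensional ℝ V]
  [MeasurableSpace V] [BorelSpace V]
  {B : Type*} [NormedRing B] [NormedAlgebra ℂ B] [CompleteSpace B]

theorem integrable_fourier_smul_and_integral_eq_zero {f : 𝓢(V, ℂ)}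
    (hf : ∀ k, iteratedFDeriv ℝ k (⇑f) 0 = 0) {p : V → B}
    (hp : p ∈ Algebra.adjoin ℂ (symbolMonomials V B : Set (V → B))) :
    Integrable (fun ξ => 𝓕 (⇑f) ξ • p ξ) ∧ ∫ ξ, 𝓕 (⇑f) ξ • p ξ = 0 := by
  rw [← Subalgebra.mem_toSubmodule, Algebra.adjoin_eq_span, Submonoid.closure_eq] at hp
  induction hp using Submodule.span_induction with
  | mem p hp =>
    obtain ⟨n, y, e, rfl⟩ := hp
    have h : (fun ξ => 𝓕 (⇑f) ξ • lineDerivSymbol y ξ • e) =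
        fun ξ => 𝓕 (⇑(∂^{y} f)) ξ • e := by
      ext ξ
      rw [fourier_iteratedLineDerivOp_apply, smul_smul, smul_eq_mul, mul_comm]
    simp only [h]
    refine ⟨(fourier_coe (∂^{y} f) ▸ (𝓕 (∂^{y} f)).integrable).smul_const e, ?_⟩
    rw [integral_smul_const, integral_fourier_eq_apply_zero,
      iteratedLineDerivOp_eq_iteratedFDeriv, hf, zero_apply, zero_smul]
  | zero => simp
  | add p q _ _ hp hq =>
    simp only [Pi.add_apply, smul_add]
    exact ⟨hp.1.add hq.1, by rw [integral_add hp.1 hq.1, hp.2, hq.2, add_zero]⟩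
  | smul c p _ hp =>
    simp only [Pi.smul_apply, smul_comm _ c]
    exact ⟨hp.1.smul c, by rw [integral_smul, hp.2, smul_zero]⟩

end Vanishing

theorem integral_fourier_ordered_exp_prod_eq_zero_of_nilpotent_general
    {B : Type*} [NormedRing B] [NormedAlgebra ℂ B] [CompleteSpace B]
    (m : ℕ) (b : Fin m → B) (hb : ∀ j, IsNilpotent (b j))
    (f : SchwartzMap (EuclideanSpace ℝ (Fin m)) ℂ)
    (hf : ∀ k : ℕ, iteratedFDeriv ℝ k (⇑f) 0 = 0) :
    (∫ ξ : EuclideanSpace ℝ (Fin m),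
      (FourierTransform.fourier (⇑f : EuclideanSpace ℝ (Fin m) → ℂ) ξ) •
        (List.ofFn fun j : Fin m =>
          NormedSpace.exp (((2 * (Real.pi : ℂ) * Complex.I) * (ξ j : ℂ)) • b j)).prod) = 0 := by
  have hp : (List.ofFn fun j (ξ : EuclideanSpace ℝ (Fin m)) =>
      NormedSpace.exp ((2 * π * I * ⟪ξ, EuclideanSpace.single j 1⟫) • b j)).prod ∈
      Algebra.adjoin ℂ
        (symbolMonomials (EuclideanSpace ℝ (Fin m)) B : Set (EuclideanSpace ℝ (Fin m) → B)) := by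
    refine Subalgebra.list_prod_mem _ fun p hp => ?_
    obtain ⟨j, rfl⟩ := List.mem_ofFn.1 hp
    exact exp_smul_mem_adjoin_symbolMonomials _ (hb j)
  convert (integrable_fourier_smul_and_integral_eq_zero hf hp).2 using 4 with ξ
  simp [Pi.list_prod_apply, List.map_ofFn, Function.comp_def, EuclideanSpace.inner_single_right]

/-- Vanishing of the ordered functional calculus integral on Schwartz functions all of whose
derivatives vanish at the origin, for nilpotent elements `b₁, …, b_m`. -/
theorem integral_fourier_ordered_exp_prod_eq_zero_of_nilpotent
    {B : Type*} [NormedRing B] [NormedAlgebra ℂ B] [CompleteSpace B]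
    (m : ℕ) (hm : 1 ≤ m) (b : Fin m → B) (hb : ∀ j, IsNilpotent (b j))
    (f : SchwartzMap (EuclideanSpace ℝ (Fin m)) ℂ)
    (hf : ∀ k : ℕ, iteratedFDeriv ℝ k (⇑f) 0 = 0) :
    (∫ ξ : EuclideanSpace ℝ (Fin m),
      (FourierTransform.fourier (⇑f : EuclideanSpace ℝ (Fin m) → ℂ) ξ) •
        (List.ofFn fun j : Fin m =>
          NormedSpace.exp (((2 * (Real.pi : ℂ) * Complex.I) * (ξ j : ℂ)) • b j)).prod) = 0 :=
  integral_fourier_ordered_exp_prod_eq_zero_of_nilpotent_general m b hb f hf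
end
end
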